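/- arXiv:1306.3047 — 6 statements merged into one kernel-verified Lean document; each statement's English description precedes it below -/
import Mathlib

section
/- Let n, m ≥ 1 and let S be an n×m complex matrix all of whose entries are algebraic over ℚ, and suppose that ᵗσS ∉ ℤᵐ for every σ ∈ ℤⁿ \ {0}. Then there exist constants C > 0 and a ≥ 0 such that ‖ᵗσS + ᵗτ‖ ≥ C·exp(−a·|σ|) for all σ ∈ ℤⁿ \ {0} and all τ ∈ ℤᵐ, where ‖·‖ denotes the supremum norm on ℂᵐ and |σ| = max₁≤i≤n |σᵢ|. -/
open Module

/-!
Liouville's inequality. After multiplying by a common denominator `d`, the entries of `S` become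
algebraic integers of the number field `K` they generate. If `β ≠ 0` is the value of an integer
linear form with coefficient vector `x`, then `d β` is a nonzero algebraic integer, so the product
of its `[K : ℚ]` conjugates is a nonzero rational integer, of modulus at least `1`. Each conjugate
is `O(‖x‖)`, hence `|β| ≫ ‖x‖ ^ (1 - [K : ℚ])`, which is stronger than the exponential bound.
The integer vector `τ` is handled by stacking the identity matrix below `S`: the coefficient vector
becomes `(σ, τ)`, and `‖τ‖ = O(‖σ‖)` as soon as `‖ᵗσ S + ᵗτ‖ ≤ 1`.
-/

theorem norm_sum_intCast_mul_le {ι : Type*} [Fintype ι] (x : ι → ℤ) (z : ι → ℂ) {A : ℝ}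
    (hA : ∀ i, ‖z i‖ ≤ A) : ‖∑ i, (x i : ℂ) * z i‖ ≤ Fintype.card ι * A * ‖x‖ :=
  calc ‖∑ i, (x i : ℂ) * z i‖ ≤ ∑ i, ‖(x i : ℂ) * z i‖ := norm_sum_le _ _
    _ ≤ ∑ _i : ι, ‖x‖ * A := by
      gcongr with i
      rw [norm_mul, Complex.norm_intCast, ← Int.norm_eq_abs]
      exact mul_le_mul (norm_le_pi_norm x i) (hA i) (norm_nonneg _) (norm_nonneg _)
    _ = Fintype.card ι * A * ‖x‖ := by
      rw [Finset.sum_const, Finset.card_univ, nsmul_eq_mul]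
      ring

section Liouville

variable {K : Type*} [Field K] [Algebra ℚ K] [FiniteDimensional ℚ K]

theorem one_le_prod_norm_embeddings {β : K} (hβ : IsIntegral ℤ β) (h0 : β ≠ 0) :
    1 ≤ ∏ φ : K →ₐ[ℚ] ℂ, ‖φ β‖ := by
  obtain ⟨z, hz⟩ := IsIntegrallyClosed.isIntegral_iff.mp (Algebra.isIntegral_norm ℚ hβ)
  have hz0 : z ≠ 0 := by
    rintro rfl
    exact Algebra.norm_ne_zero_iff.mpr h0 (by rw [← hz, map_zero])
  rw [← norm_prod, ← Algebra.norm_eq_prod_embeddings ℚ ℂ β, ← hz]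
  simpa [← Int.cast_abs] using (Int.cast_le (R := ℝ)).mpr (Int.one_le_abs hz0)

theorem one_le_norm_mul_pow_of_isIntegral {β : K} (hβ : IsIntegral ℤ β) (h0 : β ≠ 0)
    (φ₀ : K →ₐ[ℚ] ℂ) {B : ℝ} (hB : ∀ φ : K →ₐ[ℚ] ℂ, ‖φ β‖ ≤ B) :
    1 ≤ ‖φ₀ β‖ * B ^ (finrank ℚ K - 1) := by
  classical
  have hcard : (Finset.univ.erase φ₀).card = finrank ℚ K - 1 := by
    rw [Finset.card_erase_of_mem (Finset.mem_univ _), Finset.card_univ, AlgHom.card]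
  calc 1 ≤ ∏ φ : K →ₐ[ℚ] ℂ, ‖φ β‖ := one_le_prod_norm_embeddings hβ h0
    _ = ‖φ₀ β‖ * ∏ φ ∈ Finset.univ.erase φ₀, ‖φ β‖ :=
      (Finset.mul_prod_erase _ _ (Finset.mem_univ φ₀)).symm
    _ ≤ ‖φ₀ β‖ * B ^ (finrank ℚ K - 1) := by
      rw [← hcard, ← Finset.prod_const]
      gcongr with φ
      exact hB φ

theorem one_le_norm_sum_mul_pow {ι : Type*} [Fintype ι] {t : ι → K}
    (ht : ∀ i, IsIntegral ℤ (t i)) {A : ℝ} (hA : ∀ (φ : K →ₐ[ℚ] ℂ) i, ‖φ (t i)‖ ≤ A)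
    (φ₀ : K →ₐ[ℚ] ℂ) {x : ι → ℤ} (hx : ∑ i, (x i : K) * t i ≠ 0) :
    1 ≤ ‖φ₀ (∑ i, (x i : K) * t i)‖ * (Fintype.card ι * A * ‖x‖) ^ (finrank ℚ K - 1) := by
  refine one_le_norm_mul_pow_of_isIntegral ?_ hx φ₀ fun φ => ?_
  · exact IsIntegral.sum _ fun i _ => (isIntegral_intCast (x i)).mul (ht i)
  · simpa only [map_sum, map_mul, map_intCast] using norm_sum_intCast_mul_le x _ (hA φ)

theorem exists_pos_le_norm_sum_mul_pow {ι κ : Type*} [Fintype ι] [Finite κ] (s : ι → κ → K) :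
    ∃ c > 0, ∃ D : ℕ, ∀ (φ₀ : K →ₐ[ℚ] ℂ) (x : ι → ℤ) (k : κ), ∑ i, (x i : K) * s i k ≠ 0 →
      c ≤ ‖φ₀ (∑ i, (x i : K) * s i k)‖ * ‖x‖ ^ D := by
  classical
  have := Fintype.ofFinite κ
  have : CharZero K := charZero_of_injective_algebraMap (algebraMap ℚ K).injective
  obtain ⟨d, hd, hint⟩ :=
    exists_integral_multiples ℤ ℚ (Finset.univ.image fun p : ι × κ => s p.1 p.2)
  have hint' : ∀ i k, IsIntegral ℤ ((d : K) * s i k) := fun i k => by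
    simpa only [zsmul_eq_mul] using hint _ (Finset.mem_image_of_mem _ (Finset.mem_univ (i, k)))
  obtain ⟨A, hA⟩ :=
    Finite.exists_le fun p : (K →ₐ[ℚ] ℂ) × ι × κ => ‖p.1 ((d : K) * s p.2.1 p.2.2)‖
  set D := finrank ℚ K - 1
  set M : ℝ := Fintype.card ι * max A 0 + 1
  refine ⟨(|(d : ℝ)| * M ^ D)⁻¹, by positivity, D, fun φ₀ x k hx => ?_⟩
  have hsum : ∑ i, (x i : K) * ((d : K) * s i k) = d * ∑ i, (x i : K) * s i k := by
    rw [Finset.mul_sum]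
    exact Finset.sum_congr rfl fun i _ => mul_left_comm _ _ _
  have key := one_le_norm_sum_mul_pow (hint' · k)
    (fun φ i => (hA (φ, i, k)).trans (le_max_left A 0)) φ₀ (x := x)
    (by rw [hsum]; exact mul_ne_zero (Int.cast_ne_zero.mpr hd) hx)
  rw [hsum, map_mul, map_intCast, norm_mul, Complex.norm_intCast] at key
  set y := ‖φ₀ (∑ i, (x i : K) * s i k)‖
  rw [inv_le_iff_one_le_mul₀' (by positivity)]
  calc (1 : ℝ) ≤ |(d : ℝ)| * y * (Fintype.card ι * max A 0 * ‖x‖) ^ D := key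
    _ ≤ |(d : ℝ)| * y * (M * ‖x‖) ^ D := by
      gcongr
      exact le_add_of_nonneg_right zero_le_one
    _ = |(d : ℝ)| * M ^ D * (y * ‖x‖ ^ D) := by rw [mul_pow]; ring

end Liouville

theorem exists_pos_le_norm_sum_mul_pow_of_isAlgebraic {ι κ : Type*} [Fintype ι] [Finite κ]
    (S : Matrix ι κ ℂ) (hS : ∀ i k, IsAlgebraic ℚ (S i k)) :
    ∃ c > 0, ∃ D : ℕ, ∀ (x : ι → ℤ) (k : κ), ∑ i, (x i : ℂ) * S i k ≠ 0 →
      c ≤ ‖∑ i, (x i : ℂ) * S i k‖ * ‖x‖ ^ D := by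
  let K := IntermediateField.adjoin ℚ (Set.range fun p : ι × κ => S p.1 p.2)
  have : FiniteDimensional ℚ K := IntermediateField.finiteDimensional_adjoin <| by
    rintro _ ⟨p, rfl⟩
    exact (hS p.1 p.2).isIntegral
  let s : ι → κ → K := fun i k => ⟨S i k, IntermediateField.subset_adjoin ℚ _ ⟨(i, k), rfl⟩⟩
  have hval (x : ι → ℤ) (k : κ) :
      K.val (∑ i, (x i : K) * s i k) = ∑ i, (x i : ℂ) * S i k := by
    simp [s]
  obtain ⟨c, hc, D, hlower⟩ := exists_pos_le_norm_sum_mul_pow s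
  refine ⟨c, hc, D, fun x k hx => ?_⟩
  rw [← hval] at hx ⊢
  exact hlower K.val x k fun h0 => hx (by rw [h0, map_zero])

section CoefficientBound

variable {ι κ : Type*} [Fintype ι] [Fintype κ]

theorem one_le_pi_norm_of_ne_zero {x : ι → ℤ} (hx : x ≠ 0) : 1 ≤ ‖x‖ := by
  obtain ⟨i, hi⟩ := Function.ne_iff.mp hx
  calc (1 : ℝ) ≤ ‖x i‖ := by rw [Int.norm_eq_abs]; exact_mod_cast Int.one_le_abs hi
    _ ≤ ‖x‖ := norm_le_pi_norm x i

theorem sum_sumElim_mul_fromRows_one [DecidableEq κ] (S : Matrix ι κ ℂ) (σ : ι → ℤ)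
    (τ : κ → ℤ) (k : κ) :
    ∑ i, ((Sum.elim σ τ i : ℤ) : ℂ) * Matrix.fromRows S 1 i k =
      ∑ i, (σ i : ℂ) * S i k + τ k := by
  simp [Fintype.sum_sum_type, Matrix.one_apply]

theorem exists_norm_sumElim_le (S : Matrix ι κ ℂ) :
    ∃ B > 0, ∀ (σ : ι → ℤ) (τ : κ → ℤ), σ ≠ 0 →
      ‖fun k => ∑ i, (σ i : ℂ) * S i k + τ k‖ ≤ 1 → ‖Sum.elim σ τ‖ ≤ B * ‖σ‖ := by
  obtain ⟨A, hA⟩ := Finite.exists_le fun p : ι × κ => ‖S p.1 p.2‖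
  set B : ℝ := Fintype.card ι * max A 0 + 1
  have hB : 1 ≤ B := le_add_of_nonneg_left (by positivity)
  refine ⟨B, by positivity, fun σ τ hσ hL => ?_⟩
  have hσ := one_le_pi_norm_of_ne_zero hσ
  refine (pi_norm_le_iff_of_nonneg (by positivity)).mpr ?_
  rintro (i | k)
  · exact (norm_le_pi_norm σ i).trans (le_mul_of_one_le_left (norm_nonneg _) hB)
  · have hsum := norm_sum_intCast_mul_le σ (S · k) fun i => (hA (i, k)).trans (le_max_left A 0)
    have hLk : ‖∑ i, (σ i : ℂ) * S i k + τ k‖ ≤ 1 := (norm_le_pi_norm _ k).trans hL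
    calc ‖τ k‖ = ‖(∑ i, (σ i : ℂ) * S i k + τ k) - ∑ i, (σ i : ℂ) * S i k‖ := by
          simp [Int.norm_eq_abs]
      _ ≤ 1 + Fintype.card ι * max A 0 * ‖σ‖ := (norm_sub_le _ _).trans (add_le_add hLk hsum)
      _ ≤ B * ‖σ‖ := by simp only [B]; nlinarith

end CoefficientBound

theorem le_mul_exp_neg_of_le_mul_pow {c y B s : ℝ} {D : ℕ} (hy : 0 ≤ y) (hB : 0 < B)
    (hs : 0 ≤ s) (h : c ≤ y * (B * s) ^ D) : c / B ^ D * Real.exp (-D * s) ≤ y := by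
  have hpow : s ^ D ≤ Real.exp (D * s) := by
    rw [Real.exp_nat_mul]
    exact pow_le_pow_left₀ hs ((Real.add_one_le_exp s).trans' (by linarith)) D
  calc c / B ^ D * Real.exp (-D * s) ≤ y * s ^ D * Real.exp (-D * s) := by
        gcongr
        rwa [div_le_iff₀ (by positivity), mul_assoc, ← mul_pow, mul_comm s]
    _ ≤ y * Real.exp (D * s) * Real.exp (-D * s) := by gcongr
    _ = y := by rw [mul_assoc, ← Real.exp_add]; simp

theorem stmt2_general (n m : ℕ)
    (S : Matrix (Fin n) (Fin m) ℂ)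
    (halg : ∀ i j, IsAlgebraic ℚ (S i j))
    (hCousin : ∀ σ : Fin n → ℤ, σ ≠ 0 →
      ¬ ∃ τ : Fin m → ℤ, ∀ k : Fin m, ∑ i, (σ i : ℂ) * S i k = (τ k : ℂ)) :
    ∃ C : ℝ, 0 < C ∧ ∃ a : ℝ, 0 ≤ a ∧
      ∀ σ : Fin n → ℤ, σ ≠ 0 → ∀ τ : Fin m → ℤ,
        ‖(fun k : Fin m => ∑ i, (σ i : ℂ) * S i k + (τ k : ℂ))‖ ≥
          C * Real.exp (-a * ‖σ‖) := by
  obtain ⟨c, hc, D, hLiouville⟩ :=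
    exists_pos_le_norm_sum_mul_pow_of_isAlgebraic (Matrix.fromRows S 1) <| by
      rintro (i | j) k
      · exact halg i k
      · rw [Matrix.fromRows_apply_inr, Matrix.one_apply]
        split_ifs
        exacts [isAlgebraic_one, isAlgebraic_zero]
  obtain ⟨B, hB, hcoeff⟩ := exists_norm_sumElim_le S
  refine ⟨min 1 (c / B ^ D), by positivity, D, D.cast_nonneg, fun σ hσ τ => ?_⟩
  set L : Fin m → ℂ := fun k => ∑ i, (σ i : ℂ) * S i k + τ k
  rcases le_or_gt 1 ‖L‖ with hL | hL
  · calc min 1 (c / B ^ D) * Real.exp (-D * ‖σ‖) ≤ 1 * 1 := by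
          gcongr
          exacts [min_le_left _ _, Real.exp_le_one_iff.mpr (by simp; positivity)]
      _ ≤ ‖L‖ := by rwa [one_mul]
  · obtain ⟨k, hk⟩ : ∃ k, L k ≠ 0 := by
      by_contra! h
      exact hCousin σ hσ ⟨-τ, fun k => by simpa [L, eq_neg_iff_add_eq_zero] using h k⟩
    have hbound := hLiouville (Sum.elim σ τ) k (by rwa [sum_sumElim_mul_fromRows_one])
    rw [sum_sumElim_mul_fromRows_one] at hbound
    calc min 1 (c / B ^ D) * Real.exp (-D * ‖σ‖) ≤ c / B ^ D * Real.exp (-D * ‖σ‖) := by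
          gcongr
          exact min_le_right _ _
      _ ≤ ‖L k‖ := le_mul_exp_neg_of_le_mul_pow (norm_nonneg _) hB (norm_nonneg _) <|
          hbound.trans (by gcongr; exact hcoeff σ τ hσ hL.le)
      _ ≤ ‖L‖ := norm_le_pi_norm L k

/-- Theorem 4.3.  If `S` is an `n × m` complex matrix with
algebraic entries such that `ᵗσ S ∉ ℤᵐ` for every nonzero `σ ∈ ℤⁿ` (i.e. the
lattice spanned by the columns of `(Iₙ S)` defines a Cousin group), then there
are constants `C > 0` and `a ≥ 0` with
`‖ᵗσ S + ᵗτ‖ ≥ C · exp (−a·|σ|)` for all nonzero `σ ∈ ℤⁿ` and all `τ ∈ ℤᵐ`,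
where `‖·‖` is the sup norm on `ℂᵐ` and `|σ| = max |σᵢ|`. -/
theorem stmt2 (n m : ℕ) (hn : 1 ≤ n) (hm : 1 ≤ m)
    (S : Matrix (Fin n) (Fin m) ℂ)
    (halg : ∀ i j, IsAlgebraic ℚ (S i j))
    (hCousin : ∀ σ : Fin n → ℤ, σ ≠ 0 →
      ¬ ∃ τ : Fin m → ℤ, ∀ k : Fin m, ∑ i, (σ i : ℂ) * S i k = (τ k : ℂ)) :
    ∃ C : ℝ, 0 < C ∧ ∃ a : ℝ, 0 ≤ a ∧
      ∀ σ : Fin n → ℤ, σ ≠ 0 → ∀ τ : Fin m → ℤ,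
        ‖(fun k : Fin m => ∑ i, (σ i : ℂ) * S i k + (τ k : ℂ))‖ ≥
          C * Real.exp (-a * ‖σ‖) :=
  stmt2_general n m S halg hCousin
end

section
/- Let K be a number field of degree n = s + 2t over ℚ with s ≥ 1 real embeddings σ₁, …, σ_s and 2t ≥ 2 complex embeddings σ_{s+1}, …, σ_{s+t}, σ̄_{s+1}, …, σ̄_{s+t} (one from each conjugate pair chosen), and let σ : 𝒪_K → ℂ^{s+t} be given by σ(x) = (σ₁(x), …, σ_{s+t}(x)). Then σ(𝒪_K) is a lattice of rank n in ℂ^{s+t}, and there exist an invertible complex linear map T ∈ GL_{s+t}(ℂ) and an (s+t)×t complex matrix S with all entries algebraic over ℚ such that T(σ(𝒪_K)) is the additive group generated by the columns of (I_{s+t} S), and there exist constants C > 0, a ≥ 0 with ‖ᵗμS + ᵗν‖ ≥ C·exp(−a·|μ|) for all μ ∈ ℤ^{s+t} \ {0} and all ν ∈ ℤᵗ (‖·‖ the supremum norm, |μ| = maxᵢ|μᵢ|). -/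
/-!
Choose a `ℤ`-basis `b` of `𝒪_K`. Since every embedding is some `σ_j` or its conjugate, a real
relation among the vectors `σ(b_q)` is a relation among the columns of the full embedding
matrix of `b`, which is invertible; so `σ(𝒪_K)` is a lattice of rank `n`. The `σ(b_q)` span
`ℂ^{s+t}`, so `s + t` of them form a basis; `T` is the coordinate map for it and the columns of
`S` are the coordinates of the remaining `t` vectors, algebraic by Cramer's rule.

If `ᵗμ S + ᵗν = 0`, the functional `z ↦ μ ⬝ T z` is integral on `σ(𝒪_K)`, so
`x ↦ ∑ⱼ cⱼ σⱼ(x)` is `ℚ`-valued on `K` and equals `x ↦ Tr(a x) = ∑_τ τ(a) τ(x)` for some `a`.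
By Dedekind's independence of characters the coefficients agree; the embedding `σ̄_{s+1}` does not
occur among the `σⱼ`, so `a = 0`, hence `μ = 0`. Once `ᵗμ S + ᵗν` has a nonzero entry, Liouville's
inequality bounds it below by `c ‖μ‖^{-e}`, which beats `C exp(-a ‖μ‖)`.
-/

open NumberField Module

theorem one_le_prod_norm_algHom_of_isIntegral {F : Type*} [Field F] [Algebra ℚ F]
    [FiniteDimensional ℚ F] {γ : F} (hγ : IsIntegral ℤ γ) (h0 : γ ≠ 0) :
    1 ≤ ∏ τ : F →ₐ[ℚ] ℂ, ‖τ γ‖ := by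
  obtain ⟨z, hz⟩ := IsIntegrallyClosed.isIntegral_iff.mp (Algebra.isIntegral_norm ℚ hγ)
  have hz0 : z ≠ 0 := by
    rintro rfl
    exact Algebra.norm_ne_zero_iff.mpr h0 (by rw [← hz, map_zero])
  rw [← norm_prod, ← Algebra.norm_eq_prod_embeddings, ← hz, eq_intCast, map_intCast,
    Complex.norm_intCast]
  exact_mod_cast Int.one_le_abs hz0

theorem one_le_norm_mul_pow_of_isIntegral_s3 {F : Type*} [Field F] [Algebra ℚ F]
    [FiniteDimensional ℚ F] {γ : F} (hγ : IsIntegral ℤ γ) (h0 : γ ≠ 0) (τ₀ : F →ₐ[ℚ] ℂ)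
    {M : ℝ} (hM : ∀ τ : F →ₐ[ℚ] ℂ, ‖τ γ‖ ≤ M) :
    1 ≤ ‖τ₀ γ‖ * M ^ (finrank ℚ F - 1) := by
  classical
  have hcard : (Finset.univ.erase τ₀).card = finrank ℚ F - 1 := by
    rw [Finset.card_erase_of_mem (Finset.mem_univ _), Finset.card_univ, AlgHom.card]
  calc 1 ≤ ∏ τ : F →ₐ[ℚ] ℂ, ‖τ γ‖ := one_le_prod_norm_algHom_of_isIntegral hγ h0
    _ = ‖τ₀ γ‖ * ∏ τ ∈ Finset.univ.erase τ₀, ‖τ γ‖ :=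
      (Finset.mul_prod_erase _ _ (Finset.mem_univ _)).symm
    _ ≤ ‖τ₀ γ‖ * ∏ _τ ∈ Finset.univ.erase τ₀, M := by
      gcongr with τ
      exact hM τ
    _ = ‖τ₀ γ‖ * M ^ (finrank ℚ F - 1) := by rw [Finset.prod_const, hcard]

theorem one_le_norm_of_ne_zero {ι : Type*} [Fintype ι] {μ : ι → ℤ} (hμ : μ ≠ 0) :
    1 ≤ ‖μ‖ := by
  obtain ⟨i, hi⟩ := Function.ne_iff.mp hμ
  calc (1 : ℝ) ≤ ‖μ i‖ := by rw [Int.norm_eq_abs]; exact_mod_cast Int.one_le_abs hi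
    _ ≤ ‖μ‖ := norm_le_pi_norm μ i

theorem norm_map_sub_map_le {R ι : Type*} [Ring R] [Fintype ι] (f g : R →+* ℂ) (β : ι → R)
    (μ : ι → ℤ) (ν : ℤ) :
    ‖f (∑ i, μ i * β i + ν) - g (∑ i, μ i * β i + ν)‖ ≤ ‖μ‖ * ∑ i, ‖f (β i) - g (β i)‖ := by
  have hdiff : f (∑ i, μ i * β i + ν) - g (∑ i, μ i * β i + ν) =
      ∑ i, (μ i : ℂ) * (f (β i) - g (β i)) := by
    simp only [map_add, map_sum, map_mul, map_intCast, mul_sub, Finset.sum_sub_distrib]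
    ring
  rw [hdiff, Finset.mul_sum]
  refine (norm_sum_le _ _).trans (Finset.sum_le_sum fun i _ => ?_)
  rw [norm_mul, Complex.norm_intCast, ← Int.norm_eq_abs]
  gcongr
  exact norm_le_pi_norm μ i

/-- Liouville's inequality: if `τ₀ γ` is small, every conjugate of `γ` is `O(‖μ‖)`, while the
norm of the nonzero algebraic integer `γ` is at least `1`. -/
theorem exists_pos_le_norm_mul_pow_of_isIntegral {F ι : Type*} [Field F] [Algebra ℚ F]
    [FiniteDimensional ℚ F] [Fintype ι] (τ₀ : F →ₐ[ℚ] ℂ) (β : ι → F)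
    (hβ : ∀ i, IsIntegral ℤ (β i)) :
    ∃ c : ℝ, 0 < c ∧ ∃ e : ℕ, ∀ μ : ι → ℤ, μ ≠ 0 → ∀ ν : ℤ,
      ∑ i, μ i * β i + ν ≠ 0 → c ≤ ‖τ₀ (∑ i, μ i * β i + ν)‖ * ‖μ‖ ^ e := by
  let c₁ : ℝ := ∑ τ : F →ₐ[ℚ] ℂ, ∑ i, ‖τ (β i) - τ₀ (β i)‖
  let M : ℝ := 1 + c₁
  let e := finrank ℚ F - 1
  refine ⟨min 1 (M ^ e)⁻¹, by positivity, e, fun μ hμ ν hγ0 => ?_⟩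
  set γ := ∑ i, μ i * β i + ν
  have hμ1 := one_le_norm_of_ne_zero hμ
  by_cases hγ1 : 1 ≤ ‖τ₀ γ‖
  · calc min 1 (M ^ e)⁻¹ ≤ 1 := min_le_left _ _
      _ ≤ ‖τ₀ γ‖ := hγ1
      _ ≤ ‖τ₀ γ‖ * ‖μ‖ ^ e := le_mul_of_one_le_right (norm_nonneg _) (one_le_pow₀ hμ1)
  push Not at hγ1
  have hτ : ∀ τ : F →ₐ[ℚ] ℂ, ‖τ γ‖ ≤ M * ‖μ‖ := by
    intro τ
    have hconj : ‖τ γ - τ₀ γ‖ ≤ ‖μ‖ * c₁ :=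
      (norm_map_sub_map_le (τ : F →+* ℂ) τ₀ β μ ν).trans <|
        mul_le_mul_of_nonneg_left (Finset.single_le_sum (f := fun τ : F →ₐ[ℚ] ℂ =>
          ∑ i, ‖τ (β i) - τ₀ (β i)‖) (fun _ _ => by positivity)
            (Finset.mem_univ τ)) (norm_nonneg _)
    calc ‖τ γ‖ ≤ ‖τ₀ γ‖ + ‖τ γ - τ₀ γ‖ := norm_le_norm_add_norm_sub' _ _
      _ ≤ 1 + ‖μ‖ * c₁ := add_le_add hγ1.le hconj
      _ ≤ M * ‖μ‖ := by nlinarith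
  have hγ : IsIntegral ℤ γ :=
    .add (.sum _ fun i _ => .mul (isIntegral_intCast _) (hβ i)) (isIntegral_intCast _)
  have key := one_le_norm_mul_pow_of_isIntegral_s3 hγ hγ0 τ₀ hτ
  rw [mul_pow] at key
  refine (min_le_right _ _).trans ?_
  rw [inv_le_iff_one_le_mul₀ (by positivity)]
  linarith

theorem exists_pos_le_norm_mul_pow {ι : Type*} [Fintype ι] (α : ι → ℂ)
    (hα : ∀ i, IsAlgebraic ℚ (α i)) :
    ∃ c : ℝ, 0 < c ∧ ∃ e : ℕ, ∀ μ : ι → ℤ, μ ≠ 0 → ∀ ν : ℤ,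
      ∑ i, (μ i : ℂ) * α i + ν ≠ 0 → c ≤ ‖∑ i, (μ i : ℂ) * α i + ν‖ * ‖μ‖ ^ e := by
  classical
  let F := IntermediateField.adjoin ℚ (Set.range α)
  have : FiniteDimensional ℚ F := IntermediateField.finiteDimensional_adjoin
    (by rintro _ ⟨i, rfl⟩; exact (hα i).isIntegral)
  let α' : ι → F := fun i => ⟨α i, IntermediateField.subset_adjoin ℚ _ ⟨i, rfl⟩⟩
  obtain ⟨D, hD0, hD⟩ := exists_integral_multiples ℤ ℚ (Finset.univ.image α')
  obtain ⟨c, hc, e, he⟩ := exists_pos_le_norm_mul_pow_of_isIntegral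
    (IsScalarTower.toAlgHom ℚ F ℂ) (fun i => D • α' i) fun i => hD _ (by simp)
  have hD1 : 1 ≤ |(D : ℝ)| := by exact_mod_cast Int.one_le_abs hD0
  refine ⟨c / |(D : ℝ)|, by positivity, e, fun μ hμ ν hx => ?_⟩
  have hscale : IsScalarTower.toAlgHom ℚ F ℂ (∑ i, μ i * (D • α' i) + (D * ν : ℤ)) =
      D * (∑ i, (μ i : ℂ) * α i + ν) := by
    simp only [IsScalarTower.coe_toAlgHom', map_add, map_sum, map_mul, map_intCast,
      zsmul_eq_mul, mul_add, Finset.mul_sum]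
    push_cast
    exact congrArg (· + _) (Finset.sum_congr rfl fun i _ => mul_left_comm _ _ _)
  have h := he μ hμ (D * ν) fun h0 => by
    rw [h0, map_zero] at hscale
    exact mul_ne_zero (Int.cast_ne_zero.2 hD0) hx hscale.symm
  rw [hscale, norm_mul, Complex.norm_intCast, mul_assoc] at h
  rwa [div_le_iff₀' (by positivity)]

theorem exists_pos_mul_exp_le_norm {ι₁ ι₂ : Type*} [Fintype ι₁] [Fintype ι₂] [Nonempty ι₂]
    (S : Matrix ι₁ ι₂ ℂ) (hS : ∀ i k, IsAlgebraic ℚ (S i k))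
    (hS₀ : ∀ μ : ι₁ → ℤ, μ ≠ 0 → ∀ ν : ι₂ → ℤ,
      (fun k => ∑ i, (μ i : ℂ) * S i k + (ν k : ℂ)) ≠ 0) :
    ∃ C : ℝ, 0 < C ∧ ∃ a : ℝ, 0 ≤ a ∧
      ∀ μ : ι₁ → ℤ, μ ≠ 0 → ∀ ν : ι₂ → ℤ,
        ‖(fun k => ∑ i, (μ i : ℂ) * S i k + (ν k : ℂ))‖ ≥ C * Real.exp (-a * ‖μ‖) := by
  choose c hc e he using fun k => exists_pos_le_norm_mul_pow (fun i => S i k) (hS · k)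
  obtain ⟨k₀, hk₀⟩ := Finite.exists_min c
  obtain ⟨k₁, hk₁⟩ := Finite.exists_max e
  refine ⟨c k₀, hc k₀, e k₁, Nat.cast_nonneg _, fun μ hμ ν => ?_⟩
  obtain ⟨k, hk⟩ := Function.ne_iff.mp (hS₀ μ hμ ν)
  have hμ1 := one_le_norm_of_ne_zero hμ
  have hpow : ‖μ‖ ^ e k ≤ Real.exp (e k₁ * ‖μ‖) := by
    calc ‖μ‖ ^ e k ≤ ‖μ‖ ^ e k₁ := pow_le_pow_right₀ hμ1 (hk₁ k)
      _ ≤ Real.exp ‖μ‖ ^ e k₁ := by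
        gcongr
        linarith [Real.add_one_le_exp ‖μ‖]
      _ = Real.exp (e k₁ * ‖μ‖) := (Real.exp_nat_mul _ _).symm
  have hck := he k μ hμ (ν k) hk
  calc c k₀ * Real.exp (-(e k₁) * ‖μ‖) ≤ c k * (Real.exp (e k₁ * ‖μ‖))⁻¹ := by
        rw [neg_mul, Real.exp_neg]
        gcongr
        exact hk₀ k
    _ ≤ ‖∑ i, (μ i : ℂ) * S i k + ν k‖ := by
        rw [← div_eq_mul_inv, div_le_iff₀ (Real.exp_pos _)]
        exact hck.trans (by gcongr)
    _ ≤ _ := norm_le_pi_norm (fun k => ∑ i, (μ i : ℂ) * S i k + (ν k : ℂ)) k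

theorem closure_range_comp_basis {M N κ : Type*} [AddCommGroup M] [AddGroup N] (f : M →+ N)
    (b : Basis κ ℤ M) :
    AddSubgroup.closure (Set.range (f ∘ b)) = AddSubgroup.closure (Set.range f) := by
  rw [Set.range_comp, ← AddMonoidHom.map_closure, ← Submodule.span_int_eq_addSubgroupClosure,
    b.span_eq, ← AddMonoidHom.coe_range, AddSubgroup.closure_eq, Submodule.top_toAddSubgroup,
    AddMonoidHom.range_eq_map]

theorem exists_equiv_sum_basis {k V κ ι κ' : Type*} [Field k] [AddCommGroup V] [Module k V]
    [Fintype κ] [Fintype ι] [Fintype κ'] (v : κ → V) (hv : Submodule.span k (Set.range v) = ⊤)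
    (hdim : finrank k V = Fintype.card ι)
    (hcard : Fintype.card κ = Fintype.card ι + Fintype.card κ') :
    ∃ (e : ι ⊕ κ' ≃ κ) (w : Basis ι k V), ∀ j, w j = v (e (.inl j)) := by
  classical
  obtain ⟨I, -, -, hIspan, hI⟩ :=
    exists_linearIndepOn_extension (linearIndepOn_empty k v) (Set.empty_subset Set.univ)
  have hspan : Submodule.span k (Set.range fun i : I => v i) = ⊤ := by
    rw [← Set.image_eq_range, eq_top_iff, ← hv, Submodule.span_le, ← Set.image_univ]
    exact hIspan
  let bI : Basis I k V := Basis.mk hI hspan.ge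
  have hIcard : Fintype.card I = Fintype.card ι := by rw [← finrank_eq_card_basis bI, hdim]
  have hIc : Fintype.card (Iᶜ : Set κ) = Fintype.card κ' := by
    rw [Fintype.card_compl_set, hIcard, hcard]; omega
  let ε : ι ≃ I := Fintype.equivOfCardEq hIcard.symm
  refine ⟨(Equiv.sumCongr ε (Fintype.equivOfCardEq hIc.symm)).trans (Equiv.Set.sumCompl I),
    bI.reindex ε.symm, fun j => ?_⟩
  rw [Basis.reindex_apply, Equiv.symm_symm]
  exact Basis.mk_apply hI hspan.ge (ε j)

theorem Module.Basis.repr_mem_subfield {L ι : Type*} [Field L] [Fintype ι] [DecidableEq ι]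
    (E : Subfield L) (b : Basis ι L (ι → L)) (hb : ∀ i j, b i j ∈ E) {x : ι → L}
    (hx : ∀ j, x j ∈ E) (i : ι) : b.repr x i ∈ E := by
  let M := (Pi.basisFun L ι).toMatrix b
  let M' : Matrix ι ι E := fun j i => ⟨M j i, by simpa [M, Basis.toMatrix_apply] using hb i j⟩
  have hM : M = E.subtype.mapMatrix M' := rfl
  have hinv : ∀ i j, M⁻¹ i j ∈ E := by
    intro i j
    rw [Matrix.inv_def, Matrix.smul_apply, Ring.inverse_eq_inv', smul_eq_mul, hM,
      ← RingHom.map_adjugate, ← RingHom.map_det]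
    exact E.mul_mem (E.inv_mem (SetLike.coe_mem _)) (SetLike.coe_mem _)
  have hrepr : b.repr x = (M⁻¹).mulVec x := by
    rw [Matrix.inv_eq_left_inv (b.toMatrix_mul_toMatrix_flip (Pi.basisFun L ι)),
      ← (Pi.basisFun L ι).toMatrix_mulVec_repr b x]
    rfl
  rw [hrepr]
  exact E.sum_mem fun j _ => E.mul_mem (hinv i j) (hx j)

theorem exists_equiv_linearEquiv_comp_eq_sumElim {L ι κ κ' : Type*} [Field L] [Fintype ι]
    [DecidableEq ι] [Fintype κ] [Fintype κ'] (E : Subfield L) (v : κ → ι → L)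
    (hv : Submodule.span L (Set.range v) = ⊤)
    (hcard : Fintype.card κ = Fintype.card ι + Fintype.card κ') (hvE : ∀ q i, v q i ∈ E) :
    ∃ (e : ι ⊕ κ' ≃ κ) (T : (ι → L) ≃ₗ[L] (ι → L)) (S : Matrix ι κ' L),
      (∀ i k, S i k ∈ E) ∧ (T ∘ v) ∘ e = Sum.elim (fun j => Pi.single j 1) fun k i => S i k := by
  obtain ⟨e, w, hw⟩ := exists_equiv_sum_basis v hv (by simp) hcard
  refine ⟨e, w.equivFun, fun i k => w.repr (v (e (.inr k))) i,
    fun i k => w.repr_mem_subfield E (fun j i' => hw j ▸ hvE _ i') (hvE _) i, ?_⟩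
  funext q
  rcases q with j | k
  · funext i
    simp [← hw, Pi.single_apply, eq_comm]
  · rfl

section

variable {K : Type*} [Field K] {α β : Type*} (σr : α → K →+* ℂ) (σc : β → K →+* ℂ)

theorem injective_sumElim_of_bijective (henum : Function.Bijective
      (Sum.elim σr (Sum.elim σc fun j => ComplexEmbedding.conjugate (σc j)))) :
    Function.Injective (Sum.elim σr σc) := by
  have : Sum.elim σr σc = Sum.elim σr (Sum.elim σc fun j => ComplexEmbedding.conjugate (σc j)) ∘
      Sum.map id Sum.inl := by
    funext j; cases j <;> rfl
  rw [this]
  exact henum.1.comp (Sum.map_injective.2 ⟨Function.injective_id, Sum.inl_injective⟩)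

theorem not_surjective_sumElim_of_bijective [Nonempty β] (henum : Function.Bijective
      (Sum.elim σr (Sum.elim σc fun j => ComplexEmbedding.conjugate (σc j)))) :
    ¬ Function.Surjective (Sum.elim σr σc) := by
  intro hsurj
  obtain ⟨j⟩ := ‹Nonempty β›
  obtain ⟨q, hq⟩ := hsurj (ComplexEmbedding.conjugate (σc j))
  have := @henum.1 (Sum.map id Sum.inl q) (.inr (.inr j)) (by cases q <;> simpa using hq)
  cases q <;> simp at this

theorem exists_eq_or_eq_conjugate_of_bijective (henum : Function.Bijective
      (Sum.elim σr (Sum.elim σc fun j => ComplexEmbedding.conjugate (σc j)))) (τ : K →+* ℂ) :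
    ∃ j, τ = Sum.elim σr σc j ∨ τ = ComplexEmbedding.conjugate (Sum.elim σr σc j) := by
  obtain ⟨q, rfl⟩ := henum.2 τ
  rcases q with i | j | j
  exacts [⟨.inl i, .inl rfl⟩, ⟨.inr j, .inl rfl⟩, ⟨.inr j, .inr rfl⟩]

end

theorem linearIndependent_ringHom_complex (K : Type*) [Field K] :
    LinearIndependent ℂ fun τ : K →+* ℂ => (τ : K → ℂ) :=
  (linearIndependent_monoidHom K ℂ).comp (fun τ : K →+* ℂ => τ.toMonoidHom)
    RingHom.coe_monoidHom_injective

section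

variable {K : Type*} [Field K] [NumberField K] {ι : Type*} {emb : ι → K →+* ℂ}

theorem NumberField.RingOfIntegers.nonempty_fin_equiv_chooseBasisIndex {n : ℕ} (hn : finrank ℚ K = n) :
    Nonempty (Fin n ≃ Free.ChooseBasisIndex ℤ (𝓞 K)) :=
  Fintype.card_eq.mp <| by
    rw [Fintype.card_fin, ← finrank_eq_card_chooseBasisIndex, RingOfIntegers.rank, hn]

theorem linearIndependent_real_integralBasis
    (hcover : ∀ τ : K →+* ℂ, ∃ j, τ = emb j ∨ τ = ComplexEmbedding.conjugate (emb j)) :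
    LinearIndependent ℝ fun q (j : ι) => emb j (integralBasis K q) := by
  rw [Fintype.linearIndependent_iff]
  intro r hr
  have hemb : ∀ j, ∑ q, (r q : ℂ) * emb j (integralBasis K q) = 0 := fun j => by
    simpa [Complex.real_smul] using congrFun hr j
  have hτ : ∀ τ : K →+* ℂ, ∑ q, (r q : ℂ) * τ (integralBasis K q) = 0 := by
    intro τ
    obtain ⟨j, rfl | rfl⟩ := hcover τ
    · exact hemb j
    · simpa [ComplexEmbedding.conjugate_coe_eq] using congrArg (starRingEnd ℂ) (hemb j)
  have := Fintype.linearIndependent_iff.mp (canonicalEmbedding.latticeBasis K).linearIndependent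
    (fun q => (r q : ℂ)) (funext fun τ => by
      simpa [canonicalEmbedding.latticeBasis_apply, canonicalEmbedding.apply_at] using hτ τ)
  exact fun q => by exact_mod_cast this q

theorem span_integralBasis_eq_top (hinj : Function.Injective emb) :
    Submodule.span ℂ (Set.range fun q (j : ι) => emb j (integralBasis K q)) = ⊤ := by
  have hrange : (Set.range fun q (j : ι) => emb j (integralBasis K q)) =
      LinearMap.funLeft ℂ ℂ emb '' Set.range (canonicalEmbedding.latticeBasis K) := by
    rw [← Set.range_comp]
    congr
    funext q j
    simp [canonicalEmbedding.latticeBasis_apply, canonicalEmbedding.apply_at]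
  rw [hrange, ← Submodule.map_span, (canonicalEmbedding.latticeBasis K).span_eq,
    Submodule.map_top, LinearMap.range_eq_top.mpr
      (LinearMap.funLeft_surjective_of_injective ℂ ℂ emb hinj)]

theorem exists_sum_ringHom_mul_eq (ψ : K →ₗ[ℚ] ℚ) :
    ∃ a : K, ∀ x : K, ∑ τ : K →+* ℂ, τ a * τ x = ψ x := by
  let B := Algebra.traceForm ℚ K
  refine ⟨(B.toDual (traceForm_nondegenerate ℚ K)).symm ψ, fun x => ?_⟩
  rw [← LinearMap.BilinForm.apply_toDual_symm_apply (hB := traceForm_nondegenerate ℚ K) ψ x,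
    Algebra.traceForm_apply, ← eq_ratCast (algebraMap ℚ ℂ), trace_eq_sum_embeddings ℂ]
  exact (Fintype.sum_equiv (RingHom.equivRatAlgHom K ℂ) _ _ fun τ => (map_mul τ _ _).symm)

theorem eq_zero_of_apply_eq_ratLinearMap [Fintype ι] (hinj : Function.Injective emb)
    (hns : ¬ Function.Surjective emb) (φ : (ι → ℂ) →ₗ[ℂ] ℂ) (ψ : K →ₗ[ℚ] ℚ)
    (h : ∀ x : K, φ (fun j => emb j x) = ψ x) : φ = 0 := by
  classical
  obtain ⟨τ₀, hτ₀⟩ : ∃ τ₀, ∀ j, emb j ≠ τ₀ := by simpa [Function.Surjective] using hns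
  obtain ⟨a, ha⟩ := exists_sum_ringHom_mul_eq ψ
  let c : ι → ℂ := fun j => φ (Pi.single j 1)
  let f : (K →+* ℂ) → ℂ := fun τ => ∑ j, (if emb j = τ then c j else 0) - τ a
  -- `∑ τ, f τ • τ` is `x ↦ φ (σ x) - ψ x = 0`, so Dedekind's lemma kills `f`; at `τ₀` it reads
  -- `τ₀ a = 0`.
  have hf : f = 0 := by
    refine funext (Fintype.linearIndependent_iff.mp (linearIndependent_ringHom_complex K) f ?_)
    funext x
    have hφ : φ (fun j => emb j x) = ∑ j, c j * emb j x := by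
      rw [φ.pi_apply_eq_sum_univ]
      refine Finset.sum_congr rfl fun j _ => ?_
      rw [smul_eq_mul, mul_comm]
      congr 2
      funext j'
      simp [Pi.single_apply, eq_comm]
    simp only [Finset.sum_apply, Pi.smul_apply, smul_eq_mul, Pi.zero_apply, f, sub_mul,
      Finset.sum_sub_distrib, Finset.sum_mul, ite_mul, zero_mul]
    rw [Finset.sum_comm]
    simp [ha, ← hφ, h]
  have ha0 : a = 0 := by simpa [f, hτ₀] using congrFun hf τ₀
  refine LinearMap.pi_ext' fun j => LinearMap.ext_ring ?_
  simpa [f, ha0, hinj.eq_iff] using congrFun hf (emb j)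

theorem eq_zero_of_forall_apply_eq_intCast [Fintype ι] (hinj : Function.Injective emb)
    (hns : ¬ Function.Surjective emb) (φ : (ι → ℂ) →ₗ[ℂ] ℂ)
    (h : ∀ x : 𝓞 K, ∃ z : ℤ, φ (fun j => emb j x) = z) : φ = 0 := by
  choose z hz using fun q => h (RingOfIntegers.basis K q)
  refine eq_zero_of_apply_eq_ratLinearMap hinj hns φ
    ((integralBasis K).constr ℚ fun q => (z q : ℚ)) fun x => ?_
  have : (φ.restrictScalars ℚ) ∘ₗ (RingHom.pi emb).toRatAlgHom.toLinearMap =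
      (Algebra.linearMap ℚ ℂ) ∘ₗ (integralBasis K).constr ℚ fun q => (z q : ℚ) :=
    (integralBasis K).ext fun q => by
      rw [LinearMap.comp_apply, LinearMap.comp_apply, Basis.constr_basis, Algebra.linearMap_apply,
        map_intCast, integralBasis_apply]
      exact hz q
  exact LinearMap.congr_fun this x

theorem sum_mul_add_ne_zero_of_closure_eq [Fintype ι] [DecidableEq ι]
    (hinj : Function.Injective emb) (hns : ¬ Function.Surjective emb) {κ : Type*}
    (T : (ι → ℂ) ≃ₗ[ℂ] (ι → ℂ)) (S : Matrix ι κ ℂ)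
    (hT : AddSubgroup.closure (Set.range fun x : 𝓞 K => T fun j => emb j x) =
      AddSubgroup.closure (Set.range
        (Sum.elim (fun j => (Pi.single j 1 : ι → ℂ)) fun k i => S i k)))
    {μ : ι → ℤ} (hμ : μ ≠ 0) (ν : κ → ℤ) :
    (fun k => ∑ i, (μ i : ℂ) * S i k + ν k) ≠ 0 := by
  intro h0
  let dot : (ι → ℂ) →ₗ[ℂ] ℂ := ∑ i, (μ i : ℂ) • LinearMap.proj i
  have hdot : ∀ z, dot z = ∑ i, (μ i : ℂ) * z i := fun z => by simp [dot]
  have hgen : AddSubgroup.closure (Set.range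
      (Sum.elim (fun j => (Pi.single j 1 : ι → ℂ)) fun k i => S i k)) ≤
      (Int.castAddHom ℂ).range.comap dot.toAddMonoidHom := by
    rw [AddSubgroup.closure_le]
    rintro _ ⟨j | k, rfl⟩
    · exact ⟨μ j, by simp [hdot, Pi.single_apply]⟩
    · exact ⟨-ν k, by simpa [hdot] using (eq_neg_of_add_eq_zero_left (congrFun h0 k)).symm⟩
  have hφ := eq_zero_of_forall_apply_eq_intCast hinj hns (dot ∘ₗ T.toLinearMap) fun x => by
    have hx := AddSubgroup.subset_closure
      (Set.mem_range_self (f := fun x : 𝓞 K => T fun j => emb j x) x)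
    rw [hT] at hx
    obtain ⟨z, hz⟩ := hgen hx
    exact ⟨z, hz.symm⟩
  apply hμ
  funext j
  simpa [hdot, Pi.single_apply] using LinearMap.congr_fun hφ (T.symm (Pi.single j 1))

end

theorem stmt3_general (K : Type*) [Field K] [NumberField K]
    (s t : ℕ) (ht : 1 ≤ t)
    (hn : Module.finrank ℚ K = s + 2 * t)
    (σr : Fin s → (K →+* ℂ)) (σc : Fin t → (K →+* ℂ))
    (henum : Function.Bijective
      (Sum.elim σr (Sum.elim σc (fun j => ComplexEmbedding.conjugate (σc j)))
        : Fin s ⊕ (Fin t ⊕ Fin t) → (K →+* ℂ)))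
    (σmap : 𝓞 K → ((Fin s ⊕ Fin t) → ℂ))
    (hσmap : σmap = fun x : 𝓞 K =>
      Sum.elim (fun i => σr i (x : K)) (fun j => σc j (x : K))) :
    -- `σ(𝒪_K)` is a lattice of rank `n = s + 2t`
    (∃ v : Fin (s + 2 * t) → ((Fin s ⊕ Fin t) → ℂ),
      LinearIndependent ℝ v ∧
      AddSubgroup.closure (Set.range v) = AddSubgroup.closure (Set.range σmap)) ∧
    -- normal form with algebraic period matrix and the Diophantine condition
    ∃ T : ((Fin s ⊕ Fin t) → ℂ) ≃ₗ[ℂ] ((Fin s ⊕ Fin t) → ℂ),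
      ∃ S : Matrix (Fin s ⊕ Fin t) (Fin t) ℂ,
        (∀ i j, IsAlgebraic ℚ (S i j)) ∧
        AddSubgroup.closure (Set.range (fun x : 𝓞 K => T (σmap x))) =
          AddSubgroup.closure (Set.range
            (Sum.elim
              (fun j : Fin s ⊕ Fin t =>
                (Pi.single j 1 : (Fin s ⊕ Fin t) → ℂ))
              (fun k : Fin t => fun i : Fin s ⊕ Fin t => S i k))) ∧
        ∃ C : ℝ, 0 < C ∧ ∃ a : ℝ, 0 ≤ a ∧
          ∀ μ : (Fin s ⊕ Fin t) → ℤ, μ ≠ 0 → ∀ ν : Fin t → ℤ,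
            ‖(fun k : Fin t => ∑ i, (μ i : ℂ) * S i k + (ν k : ℂ))‖ ≥
              C * Real.exp (-a * ‖μ‖) := by
  have : Nonempty (Fin t) := ⟨⟨0, ht⟩⟩
  set emb := Sum.elim σr σc
  have hinj := injective_sumElim_of_bijective σr σc henum
  have hns := not_surjective_sumElim_of_bijective σr σc henum
  let f : 𝓞 K →+ (Fin s ⊕ Fin t → ℂ) :=
    ((RingHom.pi emb).comp (algebraMap (𝓞 K) K)).toAddMonoidHom
  obtain rfl : σmap = f := by
    subst hσmap
    funext x j
    cases j <;> rfl
  obtain ⟨idx⟩ := RingOfIntegers.nonempty_fin_equiv_chooseBasisIndex hn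
  let bO := (RingOfIntegers.basis K).reindex idx.symm
  let v := f ∘ bO
  have hv : v = (fun q j => emb j (integralBasis K q)) ∘ idx := by
    funext q j
    simp [v, f, bO, integralBasis_apply]
  obtain ⟨e, T, S, hSalg, hTv⟩ := exists_equiv_linearEquiv_comp_eq_sumElim
    (algebraicClosure ℚ ℂ).toSubfield (κ' := Fin t) v
    (by rw [hv, EquivLike.range_comp]; exact span_integralBasis_eq_top hinj)
    (by simp only [Fintype.card_fin, Fintype.card_sum]; omega)
    (by
      rw [hv]
      exact fun q i => mem_algebraicClosure_iff.2
        ((Algebra.IsAlgebraic.isAlgebraic (R := ℚ) _).algHom (emb i).toRatAlgHom))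
  replace hSalg i k : IsAlgebraic ℚ (S i k) := mem_algebraicClosure_iff.1 (hSalg i k)
  have hclosT : AddSubgroup.closure (Set.range fun x => T (f x)) =
      AddSubgroup.closure (Set.range (Sum.elim (fun j => Pi.single j 1) fun k i => S i k)) := by
    rw [← hTv, EquivLike.range_comp]
    exact (closure_range_comp_basis (T.toLinearMap.toAddMonoidHom.comp f) bO).symm
  refine ⟨⟨v, ?_, closure_range_comp_basis f bO⟩, T, S, hSalg, hclosT,
    exists_pos_mul_exp_le_norm S hSalg fun μ hμ ν =>
      sum_mul_add_ne_zero_of_closure_eq hinj hns T S hclosT hμ ν⟩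
  rw [hv]
  exact (linearIndependent_real_integralBasis
    (exists_eq_or_eq_conjugate_of_bijective σr σc henum)).comp idx idx.injective

/-- Corollary 4.4.  Let `K` be a number field of degree
`n = s + 2t` (`s, t ≥ 1`), with real embeddings `σ₁, …, σ_s` and complex
embeddings `σ_{s+1}, …, σ_{s+t}` (one from each conjugate pair), and let
`σ : 𝒪_K → ℂ^{s+t}` be `x ↦ (σ₁(x), …, σ_{s+t}(x))`.  Then `σ(𝒪_K)` is a
lattice of rank `n`, and there are `T ∈ GL_{s+t}(ℂ)` and an `(s+t) × t`
matrix `S` with algebraic entries such that `T(σ(𝒪_K))` is the group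
generated by the columns of `(I_{s+t} S)`, and constants `C > 0`, `a ≥ 0`
with `‖ᵗμ S + ᵗν‖ ≥ C exp(−a|μ|)` for all nonzero `μ ∈ ℤ^{s+t}` and all
`ν ∈ ℤᵗ`. -/
theorem stmt3 (K : Type*) [Field K] [NumberField K]
    (s t : ℕ) (hs : 1 ≤ s) (ht : 1 ≤ t)
    (hn : Module.finrank ℚ K = s + 2 * t)
    (σr : Fin s → (K →+* ℂ)) (σc : Fin t → (K →+* ℂ))
    (hreal : ∀ i, ComplexEmbedding.IsReal (σr i))
    (hcomplex : ∀ j, ¬ ComplexEmbedding.IsReal (σc j))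
    (henum : Function.Bijective
      (Sum.elim σr (Sum.elim σc (fun j => ComplexEmbedding.conjugate (σc j)))
        : Fin s ⊕ (Fin t ⊕ Fin t) → (K →+* ℂ)))
    (σmap : 𝓞 K → ((Fin s ⊕ Fin t) → ℂ))
    (hσmap : σmap = fun x : 𝓞 K =>
      Sum.elim (fun i => σr i (x : K)) (fun j => σc j (x : K))) :
    -- `σ(𝒪_K)` is a lattice of rank `n = s + 2t`
    (∃ v : Fin (s + 2 * t) → ((Fin s ⊕ Fin t) → ℂ),
      LinearIndependent ℝ v ∧
      AddSubgroup.closure (Set.range v) = AddSubgroup.closure (Set.range σmap)) ∧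
    -- normal form with algebraic period matrix and the Diophantine condition
    ∃ T : ((Fin s ⊕ Fin t) → ℂ) ≃ₗ[ℂ] ((Fin s ⊕ Fin t) → ℂ),
      ∃ S : Matrix (Fin s ⊕ Fin t) (Fin t) ℂ,
        (∀ i j, IsAlgebraic ℚ (S i j)) ∧
        AddSubgroup.closure (Set.range (fun x : 𝓞 K => T (σmap x))) =
          AddSubgroup.closure (Set.range
            (Sum.elim
              (fun j : Fin s ⊕ Fin t =>
                (Pi.single j 1 : (Fin s ⊕ Fin t) → ℂ))
              (fun k : Fin t => fun i : Fin s ⊕ Fin t => S i k))) ∧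
        ∃ C : ℝ, 0 < C ∧ ∃ a : ℝ, 0 ≤ a ∧
          ∀ μ : (Fin s ⊕ Fin t) → ℤ, μ ≠ 0 → ∀ ν : Fin t → ℤ,
            ‖(fun k : Fin t => ∑ i, (μ i : ℂ) * S i k + (ν k : ℂ))‖ ≥
              C * Real.exp (-a * ‖μ‖) :=
  stmt3_general K s t ht hn σr σc henum σmap hσmap
end

section
/- Let n, m be integers with 1 ≤ m ≤ n and let S be an n×m complex matrix such that the n+m columns of the matrix (Iₙ S) are linearly independent over ℝ; let Λ ⊆ ℂⁿ be the additive subgroup generated by these columns. Then every Λ-periodic holomorphic function ℂⁿ → ℂ is constant if and only if ᵗσS ∉ ℤᵐ for every σ ∈ ℤⁿ \ {0}. -/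
/-!
If `ᵗσ S ∈ ℤᵐ` for some `σ ≠ 0`, then `z ↦ e(⟨σ, z⟩)`, where `e(t) = exp (2πi t)`, is a
nonconstant `Λ`-periodic entire function. Conversely, let `f` be entire and `Λ`-periodic. Since `f`
is `ℤⁿ`-periodic, Cauchy's theorem in each variable shows that the unit-cube integral of
`f (x + c) e(-⟨σ, x + c⟩)` does not depend on `c ∈ ℂⁿ`. Taking for `c` a column `s` of `S` gives
`a_σ = e(-⟨σ, s⟩) a_σ` for the Fourier coefficients `a_σ` of `f` on `ℝⁿ`, so `a_σ = 0` for every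
`σ ≠ 0`. By Fourier uniqueness on the torus `ℝⁿ / ℤⁿ`, `f` is constant on `ℝⁿ`, hence on `ℂⁿ` by
the identity theorem along the complex lines `ζ ↦ Re z + ζ Im z`.
-/

open MeasureTheory Complex Set Filter Topology UnitAddTorus
open scoped Real

theorem Function.Periodic.intervalIntegral_comp_add_of_differentiable {g : ℂ → ℂ}
    (hg : Differentiable ℂ g) (hp : Function.Periodic g 1) (c : ℂ) :
    ∫ x in (0 : ℝ)..1, g (x + c) = ∫ x in (0 : ℝ)..1, g x := by
  -- The real part of `c` is absorbed by periodicity, the imaginary part by Cauchy's theorem on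
  -- the rectangle `[0, 1] × [0, Im c]`, whose vertical sides cancel by periodicity.
  have hreal : ∫ x in (0 : ℝ)..1, g (x + c) = ∫ x in (0 : ℝ)..1, g (x + c.im * I) := by
    have hper : Function.Periodic (fun t : ℝ => g (t + c.im * I)) 1 := fun t => by
      simpa [add_right_comm] using hp (t + c.im * I)
    calc ∫ x in (0 : ℝ)..1, g (x + c)
        = ∫ x in (0 : ℝ)..1, g (↑(x + c.re) + c.im * I) := by
          congr 1 with x
          rw [ofReal_add, add_assoc, re_add_im]
      _ = ∫ x in (0 : ℝ)..1, g (x + c.im * I) := by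
          rw [intervalIntegral.integral_comp_add_right (fun t : ℝ => g (t + c.im * I)),
            zero_add, add_comm, hper.intervalIntegral_add_eq c.re 0, zero_add]
  have hrect := integral_boundary_rect_eq_zero_of_differentiableOn g 0 (1 + c.im * I)
    hg.differentiableOn
  have hvert : ∀ y : ℝ, g (1 + y * I) = g (y * I) := fun y => by
    simpa [add_comm] using hp (y * I)
  simp [hvert] at hrect
  rw [hreal]
  linear_combination -hrect

theorem Differentiable.eq_const_of_forall_ofReal {g : ℂ → ℂ} (hg : Differentiable ℂ g) {c : ℂ}
    (hc : ∀ t : ℝ, g t = c) (z : ℂ) : g z = c := by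
  have hfreq : ∃ᶠ w in 𝓝[≠] (0 : ℂ), g w = c := by
    have hofReal : Tendsto ofReal (𝓝[≠] 0) (𝓝[≠] 0) :=
      tendsto_nhdsWithin_of_tendsto_nhds_of_eventually_within _
        ((continuous_ofReal.tendsto' 0 0 ofReal_zero).mono_left nhdsWithin_le_nhds)
        (eventually_nhdsWithin_of_forall fun t ht => ofReal_ne_zero.mpr ht)
    exact hofReal.frequently (Frequently.of_forall hc)
  have hana : AnalyticOnNhd ℂ g univ := fun w _ => hg.analyticAt w
  exact hana.eqOn_of_preconnected_of_frequently_eq analyticOnNhd_const isPreconnected_univ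
    (mem_univ 0) hfreq (mem_univ z)

theorem Differentiable.eq_const_of_forall_ofReal_comp {ι : Type*} [Fintype ι]
    {f : (ι → ℂ) → ℂ} (hf : Differentiable ℂ f) {c : ℂ}
    (hc : ∀ x : ι → ℝ, f (ofReal ∘ x) = c) (z : ι → ℂ) : f z = c := by
  let line : ℂ → ι → ℂ := fun ζ i => (z i).re + ζ * (z i).im
  have hline : Differentiable ℂ line := by fun_prop
  have hI : line I = z := funext fun i => by simp [line, mul_comm I, re_add_im]
  rw [← hI]
  refine (hf.comp hline).eq_const_of_forall_ofReal (fun t => ?_) I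
  simpa [line, Function.comp_def] using hc fun i => (z i).re + t * (z i).im

theorem Fin.comp_insertNth {n : ℕ} {α β : Type*} (φ : α → β) (j : Fin (n + 1)) (a : α)
    (p : Fin n → α) : φ ∘ j.insertNth a p = j.insertNth (φ a) (φ ∘ p) := by
  ext i; cases i using j.succAboveCases <;> simp

theorem Fin.insertNth_add_single {n : ℕ} {M : Type*} [AddMonoid M] (j : Fin (n + 1)) (a b : M)
    (p : Fin n → M) :
    Fin.insertNth (α := fun _ => M) j a p + Pi.single j b = j.insertNth (a + b) p := by
  ext i; cases i using j.succAboveCases <;> simp [j.succAbove_ne]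

theorem Differentiable.comp_insertNth {n : ℕ} {g : (Fin (n + 1) → ℂ) → ℂ}
    (hg : Differentiable ℂ g) (j : Fin (n + 1)) (p : Fin n → ℂ) :
    Differentiable ℂ fun ζ => g (j.insertNth ζ p) := by
  have h : (fun ζ => g (j.insertNth ζ p)) = g ∘ Function.update (j.insertNth 0 p) j := by
    ext ζ; simp
  rw [h]
  exact hg.comp fun ζ =>
    (hasFDerivAt_update (E := fun _ => ℂ) (i := j) (j.insertNth 0 p) ζ).differentiableAt

theorem AddSubgroup.forall_add_eq_of_mem_closure {G α : Type*} [AddGroup G] {f : G → α}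
    {s : Set G} (hs : ∀ v ∈ s, ∀ z, f (z + v) = f z) :
    ∀ v ∈ AddSubgroup.closure s, ∀ z, f (z + v) = f z := by
  intro v hv
  induction hv using AddSubgroup.closure_induction with
  | mem v hv => exact hs v hv
  | zero => simp
  | add v w _ _ hv hw => intro z; rw [← add_assoc, hw, hv]
  | neg v _ hv => intro z; rw [← hv (z + -v), neg_add_cancel_right]

theorem intCast_comp_mem_closure_range_single {ι R : Type*} [Fintype ι] [DecidableEq ι] [Ring R]
    (k : ι → ℤ) : (Int.cast ∘ k : ι → R) ∈ AddSubgroup.closure (range fun j => Pi.single j 1) := by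
  rw [← Finset.univ_sum_single (Int.cast ∘ k : ι → R)]
  refine AddSubgroup.sum_mem _ fun j _ => ?_
  convert AddSubgroup.zsmul_mem _
    (AddSubgroup.subset_closure (mem_range_self (f := fun j => (Pi.single j 1 : ι → R)) j)) (k j)
    using 1
  ext i; by_cases h : i = j <;> simp [h]

def unitCube (ι : Type*) : Set (ι → ℝ) := univ.pi fun _ => Ioc 0 1

theorem volume_restrict_unitCube (ι : Type*) [Fintype ι] :
    volume.restrict (unitCube ι) = Measure.pi fun _ : ι => volume.restrict (Ioc (0 : ℝ) 1) := by
  rw [unitCube, volume_pi, Measure.restrict_pi_pi]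

theorem Continuous.integrableOn_unitCube {ι E : Type*} [Fintype ι] [NormedAddCommGroup E]
    {F : (ι → ℝ) → E} (hF : Continuous F) : IntegrableOn F (unitCube ι) :=
  (ContinuousOn.integrableOn_compact (isCompact_univ_pi fun _ => isCompact_Icc)
    hF.continuousOn).mono_set (pi_mono fun _ _ => Ioc_subset_Icc_self)

theorem integral_unitCube_eq_integral_insertNth {n : ℕ} {E : Type*} [NormedAddCommGroup E]
    [NormedSpace ℝ E] (j : Fin (n + 1)) {F : (Fin (n + 1) → ℝ) → E} (hF : Continuous F) :
    ∫ x in unitCube (Fin (n + 1)), F x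
      = ∫ y in unitCube (Fin n), ∫ t in (0 : ℝ)..1, F (j.insertNth t y) := by
  have he := (measurePreserving_piFinSuccAbove
    (fun _ : Fin (n + 1) => (volume : Measure ℝ).restrict (Ioc 0 1)) j).symm
  have hint := hF.integrableOn_unitCube
  rw [IntegrableOn, volume_restrict_unitCube] at hint
  have hint' : Integrable (fun z => F ((MeasurableEquiv.piFinSuccAbove (fun _ => ℝ) j).symm z))
      ((volume.restrict (Ioc 0 1)).prod (Measure.pi fun _ => volume.restrict (Ioc 0 1))) :=
    (he.integrable_comp_emb (MeasurableEquiv.measurableEmbedding _)).mpr hint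
  rw [volume_restrict_unitCube, volume_restrict_unitCube,
    ← he.integral_comp (MeasurableEquiv.measurableEmbedding _), integral_prod_symm _ hint']
  congr 1 with y
  rw [intervalIntegral.integral_of_le zero_le_one]
  rfl

theorem integral_unitCube_comp_add_single {n : ℕ} {g : (Fin n → ℂ) → ℂ} (hg : Differentiable ℂ g)
    {j : Fin n} (hper : ∀ z, g (z + Pi.single j 1) = g z) (w : ℂ) :
    ∫ x in unitCube (Fin n), g (ofReal ∘ x + Pi.single j w)
      = ∫ x in unitCube (Fin n), g (ofReal ∘ x) := by
  cases n with
  | zero => exact j.elim0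
  | succ n =>
    have hslice : ∀ (y : Fin n → ℝ) (w : ℂ),
        ∫ t in (0 : ℝ)..1, g (ofReal ∘ j.insertNth t y + Pi.single j w)
          = ∫ t in (0 : ℝ)..1, g (j.insertNth (t : ℂ) (ofReal ∘ y)) := fun y w => by
      have hp : Function.Periodic (fun ζ => g (j.insertNth ζ (ofReal ∘ y))) 1 := fun ζ => by
        simp only [← Fin.insertNth_add_single, hper]
      simpa only [Fin.comp_insertNth, Fin.insertNth_add_single] using
        hp.intervalIntegral_comp_add_of_differentiable (hg.comp_insertNth j _) w
    have hcont : ∀ w, Continuous fun x : Fin (n + 1) → ℝ => g (ofReal ∘ x + Pi.single j w) :=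
      fun w => hg.continuous.comp (by fun_prop)
    calc ∫ x in unitCube (Fin (n + 1)), g (ofReal ∘ x + Pi.single j w)
        = ∫ y in unitCube (Fin n), ∫ t in (0 : ℝ)..1, g (j.insertNth (t : ℂ) (ofReal ∘ y)) := by
          simp only [integral_unitCube_eq_integral_insertNth j (hcont w), hslice]
      _ = ∫ x in unitCube (Fin (n + 1)), g (ofReal ∘ x + Pi.single j 0) := by
          simp only [integral_unitCube_eq_integral_insertNth j (hcont 0), hslice]
      _ = ∫ x in unitCube (Fin (n + 1)), g (ofReal ∘ x) := by simp

theorem integral_unitCube_comp_add {n : ℕ} {g : (Fin n → ℂ) → ℂ} (hg : Differentiable ℂ g)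
    (hper : ∀ j z, g (z + Pi.single j 1) = g z) (c : Fin n → ℂ) :
    ∫ x in unitCube (Fin n), g (ofReal ∘ x + c) = ∫ x in unitCube (Fin n), g (ofReal ∘ x) := by
  classical
  rw [← Finset.univ_sum_single c]
  induction (Finset.univ : Finset (Fin n)) using Finset.induction_on with
  | empty => simp
  | insert j s hj ih =>
    have hshift := integral_unitCube_comp_add_single
      (g := fun z => g (z + ∑ i ∈ s, Pi.single i (c i))) (j := j)
      (hg.comp (differentiable_id.add_const _)) (fun z => by rw [add_right_comm, hper]) (c j)
    simp only [add_assoc] at hshift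
    rw [Finset.sum_insert hj, hshift, ih]

theorem exists_continuousMap_unitAddTorus_apply_coe {ι : Type*} {φ : (ι → ℝ) → ℂ}
    (hφ : Continuous φ) (hper : ∀ (k : ι → ℤ) x, φ (x + Int.cast ∘ k) = φ x) :
    ∃ F : C(UnitAddTorus ι, ℂ), ∀ x, F (fun i => x i) = φ x := by
  have hopen : IsOpenQuotientMap (Pi.map fun _ : ι => (QuotientAddGroup.mk : ℝ → UnitAddCircle)) :=
    .piMap fun _ => QuotientAddGroup.isOpenQuotientMap_mk
  let q : C(ι → ℝ, UnitAddTorus ι) := ⟨_, hopen.continuous⟩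
  have hfactor : Function.FactorsThrough φ q := fun x y hxy => by
    have hk : ∀ i, ∃ k : ℤ, y i = x i + k := fun i => by
      obtain ⟨k, hk⟩ := AddSubgroup.mem_zmultiples_iff.mp
        (QuotientAddGroup.eq.mp (congr_fun hxy i))
      exact ⟨k, by simp at hk; linarith⟩
    choose k hk using hk
    rw [show y = x + Int.cast ∘ k from funext hk, hper]
  have hq : Topology.IsQuotientMap q := hopen.isQuotientMap
  exact ⟨hq.lift ⟨φ, hφ⟩ hfactor, DFunLike.congr_fun (hq.lift_comp ⟨φ, hφ⟩ hfactor)⟩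

section expPairing

variable {ι : Type*} [Fintype ι]

noncomputable def expPairing (σ : ι → ℤ) (z : ι → ℂ) : ℂ := cexp (2 * π * I * ∑ i, σ i * z i)

theorem expPairing_zero_right (σ : ι → ℤ) : expPairing σ 0 = 1 := by
  simp [expPairing]

theorem expPairing_add (σ : ι → ℤ) (z w : ι → ℂ) :
    expPairing σ (z + w) = expPairing σ z * expPairing σ w := by
  simp only [expPairing, Pi.add_apply, mul_add, Finset.sum_add_distrib, exp_add]

theorem expPairing_neg_left (σ : ι → ℤ) (z : ι → ℂ) :
    expPairing (-σ) z = (expPairing σ z)⁻¹ := by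
  simp [expPairing, ← exp_neg]

theorem expPairing_eq_one_iff (σ : ι → ℤ) (z : ι → ℂ) :
    expPairing σ z = 1 ↔ ∃ k : ℤ, ∑ i, σ i * z i = k := by
  rw [expPairing, exp_eq_one_iff]
  refine exists_congr fun k => ?_
  rw [mul_comm (k : ℂ)]
  exact mul_right_inj' (by simp [Real.pi_ne_zero])

theorem expPairing_single [DecidableEq ι] (σ : ι → ℤ) (j : ι) : expPairing σ (Pi.single j 1) = 1 :=
  (expPairing_eq_one_iff σ _).mpr ⟨σ j, by simp [Pi.single_apply]⟩

theorem exists_expPairing_eq_neg_one [DecidableEq ι] {σ : ι → ℤ} (hσ : σ ≠ 0) :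
    ∃ z, expPairing σ z = -1 := by
  obtain ⟨j, hj⟩ := Function.ne_iff.mp hσ
  refine ⟨Pi.single j (1 / (2 * σ j)), ?_⟩
  have hj' : (σ j : ℂ) ≠ 0 := by exact_mod_cast hj
  rw [expPairing, Finset.sum_eq_single j (by simp_all) (by simp), Pi.single_eq_same,
    show 2 * π * I * (σ j * (1 / (2 * σ j))) = π * I by field_simp, exp_pi_mul_I]

theorem differentiable_expPairing (σ : ι → ℤ) : Differentiable ℂ (expPairing σ) := by
  unfold expPairing; fun_prop

theorem expPairing_ofReal (σ : ι → ℤ) (x : ι → ℝ) :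
    expPairing σ (ofReal ∘ x) = mFourier σ fun i => (x i : UnitAddCircle) := by
  simp [expPairing, mFourier, ← exp_sum, Finset.mul_sum, mul_assoc]

theorem exists_differentiable_periodic_not_const [DecidableEq ι] {s : Set (ι → ℂ)} {σ : ι → ℤ}
    (hσ : σ ≠ 0) (hs : ∀ v ∈ s, ∃ k : ℤ, ∑ i, σ i * v i = k) :
    ∃ f : (ι → ℂ) → ℂ, Differentiable ℂ f ∧
      (∀ v ∈ AddSubgroup.closure s, ∀ z, f (z + v) = f z) ∧ ¬ ∃ c, ∀ z, f z = c := by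
  refine ⟨expPairing σ, differentiable_expPairing σ,
    AddSubgroup.forall_add_eq_of_mem_closure fun v hv z => ?_, ?_⟩
  · rw [expPairing_add, (expPairing_eq_one_iff σ v).mpr (hs v hv), mul_one]
  · rintro ⟨c, hc⟩
    obtain ⟨z, hz⟩ := exists_expPairing_eq_neg_one hσ
    have h := (hc z).trans (hc 0).symm
    norm_num [hz, expPairing_zero_right] at h

end expPairing

section Fourier

variable {ι : Type*} [Fintype ι]

noncomputable def fourierCoeffCube (φ : (ι → ℝ) → ℂ) (σ : ι → ℤ) : ℂ :=
  ∫ x in unitCube ι, expPairing (-σ) (ofReal ∘ x) * φ x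

theorem UnitAddTorus.apply_eq_mFourierCoeff_zero_of_forall_ne_zero (F : C(UnitAddTorus ι, ℂ))
    (hF : ∀ σ ≠ 0, mFourierCoeff F σ = 0) (t : UnitAddTorus ι) : F t = mFourierCoeff F 0 := by
  have hsingle :
      HasSum (fun σ => mFourierCoeff F σ • mFourier σ) (mFourierCoeff F 0 • mFourier 0) :=
    hasSum_single 0 fun σ hσ => by rw [hF σ hσ]; exact zero_smul ℂ (mFourier σ)
  have hF_eq := (hasSum_mFourier_series_of_summable (hasSum_single 0 hF).summable).unique hsingle
  simpa [mFourier_zero] using congr($hF_eq t)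

theorem mFourierCoeff_eq_fourierCoeffCube {φ : (ι → ℝ) → ℂ} {F : C(UnitAddTorus ι, ℂ)}
    (hF : ∀ x, F (fun i => x i) = φ x) (σ : ι → ℤ) :
    mFourierCoeff F σ = fourierCoeffCube φ σ := by
  have hcube : {x : ι → ℝ | ∀ i, x i ∈ Ioc ((0 : ι → ℝ) i) ((0 : ι → ℝ) i + 1)} = unitCube ι := by
    ext x; simp [unitCube]
  simp only [mFourierCoeff_eq_integral _ _ 0, hcube, fourierCoeffCube, expPairing_ofReal, hF,
    smul_eq_mul]

theorem exists_eq_const_of_fourierCoeffCube_eq_zero {φ : (ι → ℝ) → ℂ} (hφ : Continuous φ)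
    (hper : ∀ (k : ι → ℤ) x, φ (x + Int.cast ∘ k) = φ x)
    (hcoeff : ∀ σ ≠ 0, fourierCoeffCube φ σ = 0) : ∃ c, ∀ x, φ x = c := by
  obtain ⟨F, hF⟩ := exists_continuousMap_unitAddTorus_apply_coe hφ hper
  refine ⟨mFourierCoeff F 0, fun x => ?_⟩
  rw [← hF, apply_eq_mFourierCoeff_zero_of_forall_ne_zero F fun σ hσ => ?_]
  rw [mFourierCoeff_eq_fourierCoeffCube hF, hcoeff σ hσ]

end Fourier

theorem exists_sum_mul_eq_intCast_of_fourierCoeffCube_ne_zero {n : ℕ} {f : (Fin n → ℂ) → ℂ}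
    (hf : Differentiable ℂ f) (hper : ∀ j z, f (z + Pi.single j 1) = f z) {v : Fin n → ℂ}
    (hv : ∀ z, f (z + v) = f z) {σ : Fin n → ℤ}
    (hσ : fourierCoeffCube (fun x => f (ofReal ∘ x)) σ ≠ 0) : ∃ k : ℤ, ∑ i, σ i * v i = k := by
  let g z := expPairing (-σ) z * f z
  have hg : Differentiable ℂ g := (differentiable_expPairing _).mul hf
  have hgper : ∀ j z, g (z + Pi.single j 1) = g z := fun j z => by
    simp only [g, expPairing_add, expPairing_single, hper, mul_one]
  have hshift := integral_unitCube_comp_add hg hgper v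
  simp only [g, expPairing_add, hv, mul_right_comm _ (expPairing (-σ) v), integral_mul_const]
    at hshift
  rw [← fourierCoeffCube, mul_eq_left₀ hσ, expPairing_neg_left, inv_eq_one] at hshift
  exact (expPairing_eq_one_iff σ v).mp hshift

theorem stmt4_general (n m : ℕ)
    (S : Matrix (Fin n) (Fin m) ℂ)
    (cols : Fin n ⊕ Fin m → (Fin n → ℂ))
    (hcols : cols = Sum.elim (fun j : Fin n => (Pi.single j 1 : Fin n → ℂ))
      (fun k : Fin m => fun i : Fin n => S i k))
    (Λ : AddSubgroup (Fin n → ℂ))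
    (hΛ : Λ = AddSubgroup.closure (Set.range cols)) :
    (∀ f : (Fin n → ℂ) → ℂ, Differentiable ℂ f →
      (∀ lam ∈ Λ, ∀ z : Fin n → ℂ, f (z + lam) = f z) → ∃ c : ℂ, ∀ z, f z = c)
    ↔
    (∀ σ : Fin n → ℤ, σ ≠ 0 →
      ¬ ∃ τ : Fin m → ℤ, ∀ k : Fin m, ∑ i, (σ i : ℂ) * S i k = (τ k : ℂ)) := by
  subst hcols hΛ
  constructor
  · rintro hconst σ hσ ⟨τ, hτ⟩
    refine (exists_differentiable_periodic_not_const hσ ?_).elim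
      fun f ⟨hf, hper, hnconst⟩ => hnconst (hconst f hf hper)
    rintro _ ⟨j | k, rfl⟩
    exacts [⟨σ j, by simp [Pi.single_apply]⟩, ⟨τ k, hτ k⟩]
  · intro hcond f hf hper
    have hsingle : ∀ j z, f (z + Pi.single j 1) = f z :=
      fun j => hper _ (AddSubgroup.subset_closure ⟨Sum.inl j, rfl⟩)
    have hlattice : ∀ (k : Fin n → ℤ) x, f (ofReal ∘ (x + Int.cast ∘ k)) = f (ofReal ∘ x) :=
      fun k x => by
        have := hper _ (AddSubgroup.closure_mono (by rintro _ ⟨j, rfl⟩; exact ⟨Sum.inl j, rfl⟩)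
          (intCast_comp_mem_closure_range_single k)) (ofReal ∘ x)
        simpa [Function.comp_def, Pi.add_def] using this
    obtain ⟨c, hc⟩ := exists_eq_const_of_fourierCoeffCube_eq_zero
      (hf.continuous.comp (by fun_prop)) hlattice fun σ hσ => by
        by_contra hne
        refine hcond σ hσ ?_
        choose τ hτ using fun k => exists_sum_mul_eq_intCast_of_fourierCoeffCube_ne_zero hf hsingle
          (hper _ (AddSubgroup.subset_closure ⟨Sum.inr k, rfl⟩)) hne
        exact ⟨τ, hτ⟩
    exact ⟨c, hf.eq_const_of_forall_ofReal_comp hc⟩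

/-- Proposition 2.6, part 1, criterion.  Let `Λ ⊆ ℂⁿ` be the
lattice generated by the `n+m` columns of `(Iₙ S)` (assumed ℝ-linearly
independent), `1 ≤ m ≤ n`.  Then every `Λ`-periodic entire function `ℂⁿ → ℂ`
is constant iff `ᵗσ S ∉ ℤᵐ` for every nonzero `σ ∈ ℤⁿ`. -/
theorem stmt4 (n m : ℕ) (hm1 : 1 ≤ m) (hmn : m ≤ n)
    (S : Matrix (Fin n) (Fin m) ℂ)
    (cols : Fin n ⊕ Fin m → (Fin n → ℂ))
    (hcols : cols = Sum.elim (fun j : Fin n => (Pi.single j 1 : Fin n → ℂ))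
      (fun k : Fin m => fun i : Fin n => S i k))
    (hindep : LinearIndependent ℝ cols)
    (Λ : AddSubgroup (Fin n → ℂ))
    (hΛ : Λ = AddSubgroup.closure (Set.range cols)) :
    (∀ f : (Fin n → ℂ) → ℂ, Differentiable ℂ f →
      (∀ lam ∈ Λ, ∀ z : Fin n → ℂ, f (z + lam) = f z) → ∃ c : ℂ, ∀ z, f z = c)
    ↔
    (∀ σ : Fin n → ℤ, σ ≠ 0 →
      ¬ ∃ τ : Fin m → ℤ, ∀ k : Fin m, ∑ i, (σ i : ℂ) * S i k = (τ k : ℂ)) :=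
  stmt4_general n m S cols hcols Λ hΛ
end

section
/- Let s₁, …, s_n be complex numbers that are algebraic over ℚ. Then there exist constants C > 0 and p < 0, depending only on s₁, …, s_n, such that for all integers μ₁, …, μ_n, ν with μ₁s₁ + ⋯ + μ_ns_n + ν ≠ 0 and (μ₁, …, μ_n, ν) ≠ 0, one has |μ₁s₁ + ⋯ + μ_ns_n + ν| ≥ C·(|μ₁| + ⋯ + |μ_n| + |ν|)^{p}. -/
/-!
Liouville's argument. All `sᵢ` lie in a number field `K`, and one nonzero integer `D` makes every
`D sᵢ` an algebraic integer. For `x = ∑ μᵢ sᵢ + ν ≠ 0`, `D x` is then a nonzero algebraic integer,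
so its norm, the product of its `[K : ℚ]` conjugates, is a nonzero integer and has absolute value
at least `1`. Each conjugate of `x` is at most a constant times `S = ∑ |μᵢ| + |ν|`, so dividing
out the conjugates other than `x` itself gives `|x| ≥ C S^{1 - [K : ℚ]}`.
-/

open NumberField Module Finset

theorem isIntegral_intCast_mul_sum_add {A : Type*} [CommRing A] {ι : Type*} [Fintype ι]
    {t : ι → A} {D : ℤ} (ht : ∀ i, IsIntegral ℤ ((D : A) * t i)) (μ : ι → ℤ) (ν : ℤ) :
    IsIntegral ℤ ((D : A) * (∑ i, (μ i : A) * t i + ν)) := by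
  have h : (D : A) * (∑ i, (μ i : A) * t i + ν) = ∑ i, (μ i : A) * ((D : A) * t i) + D * ν := by
    rw [mul_add, mul_sum]
    simp only [mul_left_comm]
  rw [h]
  exact .add (.sum _ fun i _ => isIntegral_algebraMap.mul (ht i))
    (isIntegral_algebraMap.mul isIntegral_algebraMap)

theorem one_le_sum_abs_add_abs {ι : Type*} [Fintype ι] {μ : ι → ℤ} {ν : ℤ}
    (h : ¬(μ = 0 ∧ ν = 0)) : 1 ≤ ∑ i, (|μ i| : ℝ) + (|ν| : ℝ) := by
  suffices 1 ≤ ∑ i, |μ i| + |ν| by exact_mod_cast this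
  have hsum : 0 ≤ ∑ i, |μ i| := sum_nonneg fun i _ => abs_nonneg (μ i)
  rcases eq_or_ne ν 0 with rfl | hν
  · obtain ⟨i, hi⟩ := Function.ne_iff.mp fun hμ => h ⟨hμ, rfl⟩
    have := single_le_sum (fun j _ => abs_nonneg (μ j)) (mem_univ i)
    linarith [Int.one_le_abs hi, abs_zero (α := ℤ)]
  · linarith [Int.one_le_abs hν]

theorem mul_rpow_neg_le_of_le_mul_pow {a C S : ℝ} {e : ℕ} (ha : 0 ≤ a) (hS : 1 ≤ S)
    (h : C ≤ a * S ^ e) : C * S ^ (-(e + 1 : ℝ)) ≤ a := by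
  have hS0 : 0 < S := one_pos.trans_le hS
  rw [Real.rpow_neg hS0.le, ← Nat.cast_add_one, Real.rpow_natCast, ← div_eq_mul_inv,
    div_le_iff₀ (by positivity)]
  calc C ≤ a * S ^ e := h
    _ ≤ a * S ^ (e + 1) := mul_le_mul_of_nonneg_left (pow_le_pow_right₀ hS e.le_succ) ha

theorem exists_intermediateField_finiteDimensional_of_isAlgebraic {ι : Type*} [Finite ι]
    {s : ι → ℂ} (hs : ∀ i, IsAlgebraic ℚ (s i)) :
    ∃ K : IntermediateField ℚ ℂ, FiniteDimensional ℚ K ∧ ∀ i, s i ∈ K :=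
  ⟨IntermediateField.adjoin ℚ (Set.range s),
    IntermediateField.finiteDimensional_adjoin (by rintro _ ⟨i, rfl⟩; exact (hs i).isIntegral),
    fun i => IntermediateField.subset_adjoin ℚ _ ⟨i, rfl⟩⟩

namespace NumberField

variable {K : Type*} [Field K] [NumberField K]

theorem one_le_abs_norm_of_isIntegral {α : K} (hα : IsIntegral ℤ α) (hα0 : α ≠ 0) :
    1 ≤ |Algebra.norm ℚ α| := by
  let a : 𝓞 K := ⟨α, hα⟩
  have ha0 : a ≠ 0 := fun h => hα0 (congrArg ((↑) : 𝓞 K → K) h)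
  change 1 ≤ |Algebra.norm ℚ (a : K)|
  rw [← Algebra.coe_norm_int a]
  exact_mod_cast Int.one_le_abs (Algebra.norm_ne_zero_iff.mpr ha0)

theorem one_le_norm_embedding_mul_pow_of_house_le {α : K} (hα : IsIntegral ℤ α) (hα0 : α ≠ 0)
    (σ : K →+* ℂ) {B : ℝ} (hB : house α ≤ B) :
    1 ≤ ‖σ α‖ * B ^ (finrank ℚ K - 1) :=
  calc (1 : ℝ) ≤ ‖Algebra.norm ℚ α‖ := by
        rw [← Rat.norm_cast_real, Real.norm_eq_abs]
        exact_mod_cast one_le_abs_norm_of_isIntegral hα hα0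
    _ ≤ ‖σ α‖ * house α ^ (finrank ℚ K - 1) := norm_norm_le_norm_mul_house_pow α σ
    _ ≤ ‖σ α‖ * B ^ (finrank ℚ K - 1) := by gcongr; exact house_nonneg α

theorem house_sum_intCast_mul_add_le {ι : Type*} [Fintype ι] (t : ι → K) (μ : ι → ℤ) (ν : ℤ) :
    house (∑ i, (μ i : K) * t i + ν) ≤
      (1 + ∑ i, house (t i)) * (∑ i, (|μ i| : ℝ) + (|ν| : ℝ)) := by
  set H := 1 + ∑ i, house (t i)
  have hH : ∀ i, house (t i) ≤ H := fun i => by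
    have := single_le_sum (fun j _ => house_nonneg (t j)) (mem_univ i)
    linarith
  calc house (∑ i, (μ i : K) * t i + ν)
      ≤ ∑ i, house ((μ i : K) * t i) + house (ν : K) :=
        (house_add_le _ _).trans (by gcongr; exact house_sum_le_sum_house _ _)
    _ ≤ ∑ i, (|μ i| : ℝ) * H + (|ν| : ℝ) * H := by
        gcongr with i
        · exact (house_mul_le _ _).trans (by rw [house_intCast, Int.cast_abs]; gcongr; exact hH i)
        · rw [house_intCast, Int.cast_abs]
          exact le_mul_of_one_le_right (abs_nonneg _) (le_add_of_nonneg_right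
            (sum_nonneg fun j _ => house_nonneg (t j)))
    _ = H * (∑ i, (|μ i| : ℝ) + (|ν| : ℝ)) := by rw [← sum_mul]; ring

theorem exists_pos_le_norm_embedding_linearForm_mul_pow {ι : Type*} [Fintype ι] (σ : K →+* ℂ)
    (t : ι → K) :
    ∃ C : ℝ, 0 < C ∧ ∀ (μ : ι → ℤ) (ν : ℤ), ∑ i, (μ i : K) * t i + ν ≠ 0 →
      C ≤ ‖σ (∑ i, (μ i : K) * t i + ν)‖ *
        (∑ i, (|μ i| : ℝ) + (|ν| : ℝ)) ^ (finrank ℚ K - 1) := by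
  classical
  obtain ⟨D, hD0, hDt⟩ := exists_integral_multiples ℤ ℚ (univ.image t)
  have hDt' : ∀ i, IsIntegral ℤ ((D : K) * t i) := fun i => by
    simpa only [zsmul_eq_mul] using hDt (t i) (mem_image_of_mem t (mem_univ i))
  set H := 1 + ∑ i, house (t i)
  set e := finrank ℚ K - 1
  have hH : 0 < H := add_pos_of_pos_of_nonneg one_pos (sum_nonneg fun i _ => house_nonneg (t i))
  refine ⟨(|(D : ℝ)| * (|(D : ℝ)| * H) ^ e)⁻¹, by positivity, fun μ ν hx => ?_⟩
  set x := ∑ i, (μ i : K) * t i + ν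
  set S := ∑ i, (|μ i| : ℝ) + (|ν| : ℝ)
  have hhouse : house ((D : K) * x) ≤ |(D : ℝ)| * (H * S) :=
    (house_mul_le _ _).trans <| by
      rw [house_intCast, Int.cast_abs]
      gcongr
      exact house_sum_intCast_mul_add_le t μ ν
  have key := one_le_norm_embedding_mul_pow_of_house_le
    (isIntegral_intCast_mul_sum_add hDt' μ ν) (mul_ne_zero (Int.cast_ne_zero.mpr hD0) hx) σ hhouse
  rw [map_mul, map_intCast, norm_mul, Complex.norm_intCast] at key
  rw [inv_le_iff_one_le_mul₀' (by positivity)]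
  calc (1 : ℝ) ≤ |(D : ℝ)| * ‖σ x‖ * (|(D : ℝ)| * (H * S)) ^ e := key
    _ = _ := by rw [mul_pow, mul_pow, mul_pow]; ring

end NumberField

/-- lower bound for integer linear forms in algebraic
numbers, used in the proof of Theorem 4.3.  If `s₁, …, s_n` are algebraic
complex numbers, there are constants `C > 0` and `p < 0` such that
`|μ₁s₁ + ⋯ + μ_ns_n + ν| ≥ C (|μ₁| + ⋯ + |μ_n| + |ν|)^p` for all integers
`μ₁, …, μ_n, ν`, not all zero, with `μ₁s₁ + ⋯ + μ_ns_n + ν ≠ 0`. -/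
theorem stmt10 (n : ℕ) (s : Fin n → ℂ) (halg : ∀ i, IsAlgebraic ℚ (s i)) :
    ∃ C : ℝ, 0 < C ∧ ∃ p : ℝ, p < 0 ∧
      ∀ (μ : Fin n → ℤ) (ν : ℤ),
        (∑ i, (μ i : ℂ) * s i + (ν : ℂ)) ≠ 0 →
        ¬ (μ = 0 ∧ ν = 0) →
        ‖∑ i, (μ i : ℂ) * s i + (ν : ℂ)‖ ≥
          C * ((∑ i, (|μ i| : ℝ)) + (|ν| : ℝ)) ^ p := by
  obtain ⟨K, hK, hsK⟩ := exists_intermediateField_finiteDimensional_of_isAlgebraic halg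
  have : NumberField K := ⟨⟩
  let t : Fin n → K := fun i => ⟨s i, hsK i⟩
  obtain ⟨C, hC, hCle⟩ :=
    NumberField.exists_pos_le_norm_embedding_linearForm_mul_pow (algebraMap K ℂ) t
  refine ⟨C, hC, -((finrank ℚ K - 1 : ℕ) + 1 : ℝ), neg_neg_of_pos (by positivity),
    fun μ ν hx hμν => ?_⟩
  have hσ : algebraMap K ℂ (∑ i, (μ i : K) * t i + ν) = ∑ i, (μ i : ℂ) * s i + ν := by
    simp only [map_add, map_sum, map_mul, map_intCast]; rfl
  refine mul_rpow_neg_le_of_le_mul_pow (norm_nonneg _) (one_le_sum_abs_add_abs hμν) ?_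
  rw [← hσ]
  exact hCle μ ν fun h => hx (by rw [← hσ, h, map_zero])
end

section
/- Let K be a number field with s real and 2t complex embeddings, where s ≥ 1 and t ≥ 1. Then there exists a subgroup A of 𝒪_K^{*,+}, free of rank s, such that pr(l(A)) is a lattice of rank s in ℝ^s, i.e. there exists an admissible subgroup for K. -/
open NumberField NumberField.InfinitePlace

/-- The map `pr ∘ l` of the OT-construction: a unit `u` of `𝒪_K` is sent to
the vector `(log |σ₁(u)|, …, log |σ_s(u)|) ∈ ℝ^s`, whose coordinates are
indexed by the real places of `K` (at a real place the multiplicity is `1`,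
so the factor of `l` survives unchanged after the projection `pr`). -/
noncomputable def prLog (K : Type*) [Field K] [NumberField K] (u : (𝓞 K)ˣ) :
    {w : InfinitePlace K // w.IsReal} → ℝ :=
  fun w => Real.log (w.1 ((u : 𝓞 K) : K))

/-- A subgroup `A` of the units of `𝒪_K` is **admissible** for `K` if it is
contained in `𝒪_K^{*,+}` (all real embeddings positive), is free of rank
`s = nrRealPlaces K`, and `pr (l A)` is a lattice of rank `s` in `ℝ^s`;
equivalently, `A` is generated by `s` units, positive at all real embeddings,
whose images under `pr ∘ l` are linearly independent over `ℝ`. -/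
def IsAdmissible (K : Type*) [Field K] [NumberField K]
    (A : Subgroup (𝓞 K)ˣ) : Prop :=
  (∀ u ∈ A, ∀ τ : K →+* ℝ, 0 < τ ((u : 𝓞 K) : K)) ∧
  ∃ g : Fin (nrRealPlaces K) → (𝓞 K)ˣ,
    Subgroup.closure (Set.range g) = A ∧
    LinearIndependent ℝ (fun i => prLog K (g i))

/-! Take the place omitted in the regulator determinant to be a complex place `w'`. The
determinant is nonzero, so the vectors `(mult w * log w(ε))_{w ≠ w'}` of the fundamental units
`ε` span `ℝ^{w ≠ w'}`; every real place differs from `w'` and has multiplicity one, so projecting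
to the real coordinates shows that the values of `prLog` span `ℝ^s`. Pick `s` units with
independent images and square them: squares are positive at every real embedding, and `prLog`
merely doubles. -/

theorem Submodule.exists_linearIndependent_comp_of_span_range_eq_top {K V ι : Type*} [Field K]
    [AddCommGroup V] [Module K V] [FiniteDimensional K V] {v : ι → V}
    (hv : Submodule.span K (Set.range v) = ⊤) {n : ℕ} (hn : Module.finrank K V = n) :
    ∃ a : Fin n → ι, LinearIndependent K (v ∘ a) := by
  obtain ⟨f, hf, -, hli⟩ := Submodule.exists_fun_fin_finrank_span_eq K (Set.range v)
  choose a ha using hf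
  have hcard : Module.finrank K (Submodule.span K (Set.range v)) = n := by
    rw [hv, finrank_top, hn]
  refine ⟨a ∘ Fin.cast hcard.symm, ?_⟩
  simpa [Function.comp_def, ha] using hli.comp _ (Fin.cast_injective hcard.symm)

section TotallyPositive

variable (K : Type*) [Field K]

noncomputable def totallyPositiveUnits : Subgroup (𝓞 K)ˣ :=
  ⨅ τ : K →+* ℝ,
    (Units.posSubgroup ℝ).comap (Units.map (τ.comp (algebraMap (𝓞 K) K)).toMonoidHom)

variable {K}

theorem mem_totallyPositiveUnits {u : (𝓞 K)ˣ} :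
    u ∈ totallyPositiveUnits K ↔ ∀ τ : K →+* ℝ, 0 < τ ((u : 𝓞 K) : K) := by
  simp [totallyPositiveUnits, Subgroup.mem_iInf]

theorem sq_mem_totallyPositiveUnits (u : (𝓞 K)ˣ) : u ^ 2 ∈ totallyPositiveUnits K :=
  mem_totallyPositiveUnits.2 fun τ ↦ by
    simpa using pow_two_pos_of_ne_zero ((map_ne_zero τ).2 (NumberField.Units.coe_ne_zero u))

end TotallyPositive

section UnitLog

open NumberField.Units

variable {K : Type*} [Field K] [NumberField K]

theorem prLog_pow (u : (𝓞 K)ˣ) (n : ℕ) : prLog K (u ^ n) = (n : ℝ) • prLog K u := by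
  funext w
  simp [prLog, Real.log_pow]

theorem span_range_prLog_eq_top {w' : InfinitePlace K} (hw' : w'.IsComplex) :
    Submodule.span ℝ (Set.range (prLog K)) = ⊤ := by
  classical
  let e : {w // w ≠ w'} ≃ Fin (rank K) := Fintype.equivOfCardEq <| by
    rw [Fintype.card_subtype_compl, Fintype.card_subtype_eq, Fintype.card_fin, rank]
  let M : Matrix {w // w ≠ w'} {w // w ≠ w'} ℝ :=
    .of fun i w ↦ (mult w.val : ℝ) * Real.log (w.val (fundSystem K (e i) : K))
  have hM : M.det ≠ 0 := fun h ↦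
    regulator_ne_zero K (by rw [regulator_eq_det K w' e]; simp [M, h])
  have hrows : Submodule.span ℝ (Set.range M) = ⊤ :=
    (Matrix.linearIndependent_rows_of_det_ne_zero hM).span_eq_top_of_card_eq_finrank' (by simp)
  let ι : {w : InfinitePlace K // w.IsReal} → {w // w ≠ w'} :=
    fun w ↦ ⟨w.1, ne_of_isReal_isComplex w.2 hw'⟩
  have hι : Function.Injective ι := fun _ _ h ↦ by simpa [ι, Subtype.ext_iff] using h
  have hrestrict (i) : LinearMap.funLeft ℝ ℝ ι (M i) = prLog K (fundSystem K (e i)) := by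
    funext w
    simp [ι, M, prLog, w.2.mult_eq_one]
  have hsurj := LinearMap.funLeft_surjective_of_injective ℝ ℝ ι hι
  rw [eq_top_iff, ← LinearMap.range_eq_top.2 hsurj, LinearMap.range_eq_map, ← hrows,
    Submodule.map_span]
  refine Submodule.span_mono ?_
  rintro _ ⟨_, ⟨i, rfl⟩, rfl⟩
  exact ⟨_, (hrestrict i).symm⟩

theorem isAdmissible_closure_sq {g : Fin (nrRealPlaces K) → (𝓞 K)ˣ}
    (hg : LinearIndependent ℝ fun i ↦ prLog K (g i)) :
    IsAdmissible K (Subgroup.closure (Set.range fun i ↦ g i ^ 2)) := by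
  refine ⟨fun u hu ↦ mem_totallyPositiveUnits.1 ?_, _, rfl, ?_⟩
  · refine (Subgroup.closure_le _).2 ?_ hu
    rintro _ ⟨i, rfl⟩
    exact sq_mem_totallyPositiveUnits (g i)
  · simp_rw [prLog_pow]
    exact hg.units_smul fun _ ↦ Units.mk0 2 two_ne_zero

end UnitLog

theorem stmt14_general (K : Type*) [Field K] [NumberField K]
    (t : ℕ) (ht : t = nrComplexPlaces K) (ht1 : 1 ≤ t) :
    ∃ A : Subgroup (𝓞 K)ˣ, IsAdmissible K A := by
  classical
  obtain ⟨⟨w', hw'⟩⟩ : Nonempty {w : InfinitePlace K // w.IsComplex} :=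
    Fintype.card_pos_iff.1 (ht ▸ ht1 : 1 ≤ nrComplexPlaces K)
  obtain ⟨g, hg⟩ := Submodule.exists_linearIndependent_comp_of_span_range_eq_top
    (span_range_prLog_eq_top hw') (Module.finrank_fintype_fun_eq_card ℝ)
  exact ⟨_, isAdmissible_closure_sq hg⟩

/-- existence of admissible subgroups, from the
construction of OT-manifolds.  If a number field `K` has `s ≥ 1` real and
`2t` complex embeddings with `t ≥ 1`, then there exists an admissible
subgroup `A` of `𝒪_K^{*,+}`: a subgroup, free of rank `s`, contained in
`𝒪_K^{*,+}`, with `pr (l A)` a lattice of rank `s` in `ℝ^s`. -/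
theorem stmt14 (K : Type*) [Field K] [NumberField K]
    (s t : ℕ) (hs : s = nrRealPlaces K) (ht : t = nrComplexPlaces K)
    (hs1 : 1 ≤ s) (ht1 : 1 ≤ t) :
    ∃ A : Subgroup (𝓞 K)ˣ, IsAdmissible K A :=
  stmt14_general K t ht ht1
end

section
/- Let k ≥ 1, let G be a dense additive subgroup of ℝ^k, regarded as a subgroup of ℂ^k via the standard inclusion ℝ^k ⊆ ℂ^k, and let Ũ ⊆ ℂ^k be a nonempty connected open set with Ũ + x = Ũ for every x ∈ ℝ^k. Let f : Ũ → ℂ be a holomorphic function whose zero set is invariant under translation by G, i.e. f(z) = 0 implies f(z + g) = 0 for every g ∈ G. If f(w) = 0 for some w ∈ Ũ, then f is identically zero on Ũ. -/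
/-!
Since `G` is dense and `f` is continuous, `f` vanishes on the real slice `w + ℝ^k ⊆ Ũ`. On a
small polydisc around `w`, every point `z` lies on a complex line `t ↦ p + t v` whose real points
`p + ℝ v` lie in `w + ℝ^k`; the one-variable identity theorem on the (convex) trace of the polydisc
on that line gives `f z = 0`. So `f` vanishes near `w`, and the identity theorem in several
variables, reduced to one variable along complex lines in the same way, spreads this over the
connected set `Ũ`.
-/

open Filter Set Topology

section

variable {E F : Type*} [NormedAddCommGroup E] [NormedSpace ℂ E]
  [NormedAddCommGroup F] [NormedSpace ℂ F] [CompleteSpace F]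

theorem DifferentiableOn.eq_zero_on_line_of_eventually_eq_zero_real {f : E → F} {C : Set E}
    (hf : DifferentiableOn ℂ f C) (hCo : IsOpen C) (hC : Convex ℝ C) {p v : E} (hp : p ∈ C)
    (h0 : ∀ᶠ x : ℝ in 𝓝 0, f (p + (x : ℂ) • v) = 0) {t : ℂ} (ht : p + t • v ∈ C) :
    f (p + t • v) = 0 := by
  set line : ℂ → E := fun s => p + s • v
  have hline : Differentiable ℂ line := by fun_prop
  have hS : Convex ℝ (line ⁻¹' C) :=
    (hC.translate_preimage_right p).linear_preimage
      ((LinearMap.toSpanSingleton ℂ E v).restrictScalars ℝ)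
  have hzero_freq : ∃ᶠ s in 𝓝[≠] (0 : ℂ), f (line s) = 0 := by
    have hreal : Tendsto ((↑) : ℝ → ℂ) (𝓝[≠] 0) (𝓝[≠] 0) :=
      tendsto_nhdsWithin_of_tendsto_nhds_of_eventually_within _
        (Complex.continuous_ofReal.tendsto' 0 0 Complex.ofReal_zero |>.mono_left nhdsWithin_le_nhds)
        (eventually_nhdsWithin_of_forall fun x hx => by simpa using hx)
    exact hreal.frequently (eventually_nhdsWithin_of_eventually_nhds h0).frequently
  exact ((hf.comp hline.differentiableOn (mapsTo_preimage _ _)).analyticOnNhd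
    (hCo.preimage hline.continuous)).eqOn_zero_of_preconnected_of_frequently_eq_zero
    hS.isPreconnected (by simpa [line] using hp) hzero_freq ht

theorem DifferentiableOn.eqOn_zero_of_isPreconnected_of_eventuallyEq_zero {f : E → F}
    {U : Set E} (hf : DifferentiableOn ℂ f U) (hUo : IsOpen U) (hU : IsPreconnected U)
    {z₀ : E} (h₀ : z₀ ∈ U) (hfz₀ : f =ᶠ[𝓝 z₀] 0) : EqOn f 0 U := by
  suffices U ⊆ {z | f =ᶠ[𝓝 z] 0} from fun z hz => (this hz).self_of_nhds
  refine hU.subset_of_closure_inter_subset isOpen_setOfPred_eventually_nhds ⟨z₀, h₀, hfz₀⟩ ?_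
  rintro z ⟨hz_cl, hzU⟩
  obtain ⟨r, hr, hball⟩ := Metric.isOpen_iff.1 hUo z hzU
  obtain ⟨z', hz'_zero, hzz'⟩ := Metric.mem_closure_iff.1 hz_cl r hr
  filter_upwards [Metric.ball_mem_nhds z hr] with y hy
  have h0 : ∀ᶠ x : ℝ in 𝓝 0, f (z' + (x : ℂ) • (y - z')) = 0 :=
    (Continuous.tendsto' (by fun_prop) 0 z' (by simp)).eventually hz'_zero
  simpa using (hf.mono hball).eq_zero_on_line_of_eventually_eq_zero_real Metric.isOpen_ball
    (convex_ball z r) (by rwa [Metric.mem_ball, dist_comm]) h0 (t := 1) (by simpa using hy)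

theorem DifferentiableOn.eventuallyEq_zero_of_forall_add_ofReal_eq_zero {ι : Type*} [Fintype ι]
    {f : (ι → ℂ) → F} {U : Set (ι → ℂ)} (hf : DifferentiableOn ℂ f U) (hUo : IsOpen U)
    {w : ι → ℂ} (hw : w ∈ U) (hreal : ∀ x : ι → ℝ, f (w + fun i => (x i : ℂ)) = 0) :
    f =ᶠ[𝓝 w] 0 := by
  obtain ⟨r, hr, hball⟩ := Metric.isOpen_iff.1 hUo w hw
  filter_upwards [Metric.ball_mem_nhds w hr] with z hz
  set a : ι → ℝ := fun i => (z i - w i).re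
  set b : ι → ℝ := fun i => (z i - w i).im
  have hz_eq : z = (w + fun i => (a i : ℂ)) + Complex.I • fun i => (b i : ℂ) := by
    funext i; apply Complex.ext <;> simp [a, b]
  have hp : (w + fun i => (a i : ℂ)) ∈ Metric.ball w r := by
    rw [mem_ball_iff_norm, add_sub_cancel_left, pi_norm_lt_iff hr]
    intro i
    calc ‖(a i : ℂ)‖ = |(z i - w i).re| := Complex.norm_real _
      _ ≤ ‖z i - w i‖ := Complex.abs_re_le_norm _
      _ ≤ ‖z - w‖ := norm_le_pi_norm (z - w) i
      _ < r := mem_ball_iff_norm.1 hz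
  have h0 : ∀ x : ℝ, f ((w + fun i => (a i : ℂ)) + (x : ℂ) • fun i => (b i : ℂ)) = 0 := by
    intro x
    convert hreal (a + x • b) using 2
    funext i; apply Complex.ext <;> simp [add_assoc]
  rw [hz_eq]
  exact (hf.mono hball).eq_zero_on_line_of_eventually_eq_zero_real Metric.isOpen_ball
    (convex_ball w r) hp (Eventually.of_forall h0) (hz_eq ▸ hz)

end

theorem stmt16_general (k : ℕ) (G : AddSubgroup (Fin k → ℝ))
    (hG : Dense (G : Set (Fin k → ℝ)))
    (U : Set (Fin k → ℂ)) (hUopen : IsOpen U)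
    (hUconn : IsConnected U)
    (hUinv : ∀ x : Fin k → ℝ, (fun z => z + fun i => (x i : ℂ)) '' U = U)
    (f : (Fin k → ℂ) → ℂ) (hf : DifferentiableOn ℂ f U)
    (hzero : ∀ z ∈ U, f z = 0 → ∀ g ∈ G, f (z + fun i => (g i : ℂ)) = 0)
    (w : Fin k → ℂ) (hw : w ∈ U) (hfw : f w = 0) :
    ∀ z ∈ U, f z = 0 := by
  have hw_real : ∀ x : Fin k → ℝ, (w + fun i => (x i : ℂ)) ∈ U :=
    fun x => hUinv x ▸ mem_image_of_mem _ hw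
  have hreal : ∀ x : Fin k → ℝ, f (w + fun i => (x i : ℂ)) = 0 := by
    have hcont : Continuous fun x : Fin k → ℝ => f (w + fun i => (x i : ℂ)) :=
      hf.continuousOn.comp_continuous (by fun_prop) hw_real
    exact congrFun (hcont.ext_on hG continuous_const fun g hg => hzero w hw hfw g hg)
  exact hf.eqOn_zero_of_isPreconnected_of_eventuallyEq_zero hUopen hUconn.isPreconnected hw
    (hf.eventuallyEq_zero_of_forall_add_ofReal_eq_zero hUopen hw hreal)

/-- final step in the proof of Theorem 2.10.  Let `G` be a
dense additive subgroup of `ℝ^k`, viewed inside `ℂ^k` via the standard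
inclusion, and let `Ũ ⊆ ℂ^k` be a nonempty connected open set invariant under
all real translations.  If `f` is holomorphic on `Ũ`, its zero set is
invariant under translation by `G`, and `f` vanishes at some point of `Ũ`,
then `f` vanishes identically on `Ũ`. -/
theorem stmt16 (k : ℕ) (hk : 1 ≤ k) (G : AddSubgroup (Fin k → ℝ))
    (hG : Dense (G : Set (Fin k → ℝ)))
    (U : Set (Fin k → ℂ)) (hUne : U.Nonempty) (hUopen : IsOpen U)
    (hUconn : IsConnected U)
    (hUinv : ∀ x : Fin k → ℝ, (fun z => z + fun i => (x i : ℂ)) '' U = U)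
    (f : (Fin k → ℂ) → ℂ) (hf : DifferentiableOn ℂ f U)
    (hzero : ∀ z ∈ U, f z = 0 → ∀ g ∈ G, f (z + fun i => (g i : ℂ)) = 0)
    (w : Fin k → ℂ) (hw : w ∈ U) (hfw : f w = 0) :
    ∀ z ∈ U, f z = 0 :=
  stmt16_general k G hG U hUopen hUconn hUinv f hf hzero w hw hfw
end
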